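/- arXiv:2303.11867 — 7 statements merged into one kernel-verified Lean document; each statement's English description precedes it below -/
import Mathlib

section
/- Let d ≥ 1 be an integer, γ ∈ (1, (d+2)/d), ρ > 0 and u ∈ ℝ^d, and let M_{ρ,u} be the positive-part equilibrium function. Then ∫_{ℝ^d} M_{ρ,u}(v) dv = ρ. -/
open MeasureTheory Real

noncomputable section

/-- The exponent `n = 2/(γ-1) - d`. -/
def nExp (d : ℕ) (γ : ℝ) : ℝ := 2 / (γ - 1) - d

/-- The normalizing constant
`c = (2γ/(γ-1))^{-1/(γ-1)} Γ(γ/(γ-1)) / (π^{d/2} Γ(n/2+1))`. -/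
def cConst (d : ℕ) (γ : ℝ) : ℝ :=
  (2 * γ / (γ - 1)) ^ (-(1 / (γ - 1))) * Real.Gamma (γ / (γ - 1)) /
    (Real.pi ^ ((d : ℝ) / 2) * Real.Gamma (nExp d γ / 2 + 1))

/-- The positive-part equilibrium function
`M_{ρ,u}(v) = c ((2γ/(γ-1)) ρ^{γ-1} - |v-u|²)_+^{n/2}` (the case `1 < γ < (d+2)/d`). -/
def Mpos (d : ℕ) (γ ρ : ℝ) (u v : EuclideanSpace ℝ (Fin d)) : ℝ :=
  cConst d γ * (max (2 * γ / (γ - 1) * ρ ^ (γ - 1) - ‖v - u‖ ^ 2) 0) ^ (nExp d γ / 2)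

lemma realBeta {a b c : ℝ} (ha : 0 < a) (hb : 0 < b) (hc : 0 < c) :
    ∫ x in (0:ℝ)..c, x ^ (a - 1) * (c - x) ^ (b - 1) =
      c ^ (a + b - 1) * (Real.Gamma a * Real.Gamma b / Real.Gamma (a + b)) := by
  have key : ∫ x in (0:ℝ)..c, (x:ℂ) ^ ((a:ℂ) - 1) * ((c:ℂ) - x) ^ ((b:ℂ) - 1) =
      (c:ℂ) ^ ((a:ℂ) + b - 1) * Complex.betaIntegral a b :=
    Complex.betaIntegral_scaled a b hc
  have hG : Complex.Gamma ((a:ℂ) + b) ≠ 0 := by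
    rw [← Complex.ofReal_add, Complex.Gamma_ofReal]
    exact_mod_cast (Real.Gamma_pos_of_pos (by linarith)).ne'
  have hbeta : Complex.betaIntegral a b =
      Complex.Gamma a * Complex.Gamma b / Complex.Gamma ((a:ℂ) + b) := by
    rw [eq_div_iff hG, mul_comm (Complex.betaIntegral a b),
      ← Complex.Gamma_mul_Gamma_eq_betaIntegral (by simpa using ha) (by simpa using hb)]
  have hreal : ((∫ x in (0:ℝ)..c, x ^ (a - 1) * (c - x) ^ (b - 1) : ℝ) : ℂ) =
      ∫ x in (0:ℝ)..c, (x:ℂ) ^ ((a:ℂ) - 1) * ((c:ℂ) - x) ^ ((b:ℂ) - 1) := by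
    rw [← intervalIntegral.integral_ofReal]
    refine intervalIntegral.integral_congr fun x hx => ?_
    rw [Set.uIcc_of_le hc.le] at hx
    rw [show ((a:ℂ) - 1) = ((a - 1 : ℝ) : ℂ) by push_cast; ring,
        show ((b:ℂ) - 1) = ((b - 1 : ℝ) : ℂ) by push_cast; ring,
        show ((c:ℂ) - (x:ℂ)) = ((c - x : ℝ) : ℂ) by push_cast; ring,
        ← Complex.ofReal_cpow hx.1,
        ← Complex.ofReal_cpow (by linarith [hx.2] : (0:ℝ) ≤ c - x), ← Complex.ofReal_mul]
  have := hreal.trans (key.trans (by rw [hbeta]))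
  rw [show ((c:ℂ) ^ ((a:ℂ) + b - 1)) = ((c ^ (a + b - 1) : ℝ) : ℂ) by
      rw [Complex.ofReal_cpow hc.le]; push_cast; ring_nf] at this
  rw [Complex.Gamma_ofReal, Complex.Gamma_ofReal, ← Complex.ofReal_add,
    Complex.Gamma_ofReal] at this
  have h2 : ((∫ x in (0:ℝ)..c, x ^ (a - 1) * (c - x) ^ (b - 1) : ℝ) : ℂ) =
      ((c ^ (a + b - 1) * (Real.Gamma a * Real.Gamma b / Real.Gamma (a + b)) : ℝ) : ℂ) := by
    rw [this]; push_cast; ring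
  exact_mod_cast h2

/-- Zeroth velocity moment of the positive-part equilibrium function: `∫ M_{ρ,u} dv = ρ`. -/
theorem zeroth_moment_Mpos (d : ℕ) (hd : 1 ≤ d) (γ : ℝ) (hγ : 1 < γ)
    (hγ' : γ < ((d : ℝ) + 2) / (d : ℝ)) (ρ : ℝ) (hρ : 0 < ρ)
    (u : EuclideanSpace ℝ (Fin d)) :
    (∫ v : EuclideanSpace ℝ (Fin d), Mpos d γ ρ u v) = ρ := by
  have hγ1 : 0 < γ - 1 := by linarith
  have hdpos : (0:ℝ) < d := by exact_mod_cast hd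
  have hn : 0 < nExp d γ := by
    have h1 : γ * d < d + 2 := by
      have := (lt_div_iff₀ hdpos).mp hγ'
      nlinarith
    have : (d:ℝ) < 2 / (γ - 1) := by rw [lt_div_iff₀ hγ1]; nlinarith
    unfold nExp; linarith
  set p : ℝ := nExp d γ / 2 with hpdef
  have hppos : 0 < p := by positivity
  set R2 : ℝ := 2 * γ / (γ - 1) * ρ ^ (γ - 1) with hR2def
  have hA : 0 < 2 * γ / (γ - 1) := by positivity
  have hR2pos : 0 < R2 := by
    exact mul_pos hA (rpow_pos_of_pos hρ _)
  haveI : Nonempty (Fin d) := ⟨⟨0, hd⟩⟩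
  haveI : Nontrivial (EuclideanSpace ℝ (Fin d)) := by
    apply Module.nontrivial_of_finrank_pos (R := ℝ)
    rw [finrank_euclideanSpace_fin]
    omega
  -- Step 1: pull out constant and translate
  have step1 : (∫ v : EuclideanSpace ℝ (Fin d), Mpos d γ ρ u v) =
      cConst d γ * ∫ v : EuclideanSpace ℝ (Fin d), (max (R2 - ‖v‖ ^ 2) 0) ^ p := by
    unfold Mpos
    rw [MeasureTheory.integral_const_mul]
    congr 1
    exact integral_sub_right_eq_self (fun w => (max (R2 - ‖w‖ ^ 2) 0) ^ p) u
  -- Step 2: radial reduction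
  have hdim : Module.finrank ℝ (EuclideanSpace ℝ (Fin d)) = d := finrank_euclideanSpace_fin
  have step2 : (∫ v : EuclideanSpace ℝ (Fin d), (max (R2 - ‖v‖ ^ 2) 0) ^ p) =
      d • ((volume (Metric.ball (0 : EuclideanSpace ℝ (Fin d)) 1)).toReal •
        ∫ y in Set.Ioi (0:ℝ), y ^ (d - 1) • (max (R2 - y ^ 2) 0) ^ p) := by
    have := integral_fun_norm_addHaar (volume : Measure (EuclideanSpace ℝ (Fin d)))
      (fun r => (max (R2 - r ^ 2) 0) ^ p)
    rw [hdim] at this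
    exact this
  -- Step 3: the radial integral
  set g : ℝ → ℝ := fun t => (1/2) * (t ^ ((d:ℝ)/2 - 1) * (max (R2 - t) 0) ^ p) with hgdef
  have step3a : (∫ y in Set.Ioi (0:ℝ), y ^ (d - 1) • (max (R2 - y ^ 2) 0) ^ p)
      = ∫ t in Set.Ioi (0:ℝ), g t := by
    rw [← integral_comp_rpow_Ioi g (two_ne_zero)]
    refine setIntegral_congr_fun measurableSet_Ioi fun y hy => ?_
    have hy0 : (0:ℝ) < y := hy
    have hsq : y ^ ((2:ℝ)) = y ^ 2 := by
      rw [← rpow_natCast y 2]; norm_num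
    have hpow : ((y ^ 2 : ℝ)) ^ ((d:ℝ)/2 - 1) = y ^ ((d:ℝ) - 2) := by
      rw [← rpow_natCast y 2, ← rpow_mul hy0.le]; norm_num; ring_nf
    have hnat : (y : ℝ) ^ (d - 1) = y ^ ((d:ℝ) - 1) := by
      rw [← rpow_natCast y (d - 1)]
      congr 1
      rw [Nat.cast_sub hd]; norm_num
    rw [smul_eq_mul, smul_eq_mul, hsq, hgdef]
    simp only []
    rw [hpow]
    have hyy : y * y ^ ((d:ℝ) - 2) = y ^ ((d:ℝ) - 1) := by
      nth_rewrite 1 [← rpow_one y]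
      rw [← rpow_add hy0]; congr 1; ring
    rw [hnat, show |(2:ℝ)| * y ^ ((2:ℝ) - 1) = 2 * y by
      rw [abs_of_pos (by norm_num : (0:ℝ) < 2)]; norm_num, ← hyy]
    ring
  have step3b : (∫ t in Set.Ioi (0:ℝ), g t) = ∫ t in Set.Ioc 0 R2, g t := by
    rw [show (∫ t in Set.Ioi (0:ℝ), g t) =
        ∫ t in Set.Ioi (0:ℝ), (Set.Ioc 0 R2).indicator g t from
      setIntegral_congr_fun measurableSet_Ioi fun t ht => by
        by_cases hle : t ≤ R2
        · rw [Set.indicator_of_mem (Set.mem_Ioc.mpr ⟨Set.mem_Ioi.mp ht, hle⟩)]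
        · rw [Set.indicator_of_notMem (fun hmem => hle (Set.mem_Ioc.mp hmem).2)]
          have : max (R2 - t) 0 = 0 := max_eq_right (by linarith [lt_of_not_ge hle])
          simp only [hgdef, this, Real.zero_rpow hppos.ne', mul_zero, zero_mul]]
    rw [integral_indicator measurableSet_Ioc, Measure.restrict_restrict measurableSet_Ioc,
      Set.inter_eq_left.mpr (fun t ht => ht.1)]
  have step3c : (∫ t in Set.Ioc 0 R2, g t) =
      (1/2) * (R2 ^ ((d:ℝ)/2 + p) *
        (Real.Gamma ((d:ℝ)/2) * Real.Gamma (p+1) / Real.Gamma ((d:ℝ)/2 + (p+1)))) := by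
    rw [← intervalIntegral.integral_of_le hR2pos.le]
    have : (∫ t in (0:ℝ)..R2, g t) =
        ∫ t in (0:ℝ)..R2, (1/2) * (t ^ ((d:ℝ)/2 - 1) * (R2 - t) ^ ((p+1) - 1)) := by
      refine intervalIntegral.integral_congr fun t ht => ?_
      rw [Set.uIcc_of_le hR2pos.le] at ht
      have : max (R2 - t) 0 = R2 - t := max_eq_left (by linarith [ht.2])
      simp only [hgdef, this, add_sub_cancel_right]
    rw [this, intervalIntegral.integral_const_mul,
      realBeta (by positivity) (by positivity : (0:ℝ) < p + 1) hR2pos]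
    congr 2
    ring
  -- volume of unit ball
  have hVb : (volume (Metric.ball (0 : EuclideanSpace ℝ (Fin d)) 1)).toReal =
      π ^ ((d:ℝ)/2) / Real.Gamma ((d:ℝ)/2 + 1) := by
    rw [EuclideanSpace.volume_ball]
    rw [Fintype.card_fin]
    have hsqrtpi : (Real.sqrt π) ^ d = π ^ ((d:ℝ)/2) := by
      rw [sqrt_eq_rpow, ← rpow_natCast (π ^ ((1:ℝ)/2)) d, ← rpow_mul pi_nonneg]
      congr 1; ring
    rw [ENNReal.ofReal_one, one_pow, one_mul, ENNReal.toReal_ofReal (by positivity), hsqrtpi]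
  have hGd2 : (0:ℝ) < Real.Gamma ((d:ℝ)/2) := Real.Gamma_pos_of_pos (by positivity)
  have hGp1 : (0:ℝ) < Real.Gamma (p + 1) := Real.Gamma_pos_of_pos (by positivity)
  have hGg : (0:ℝ) < Real.Gamma (γ/(γ-1)) := Real.Gamma_pos_of_pos (by positivity)
  have hGd1 : Real.Gamma ((d:ℝ)/2 + 1) = ((d:ℝ)/2) * Real.Gamma ((d:ℝ)/2) :=
    Real.Gamma_add_one (by positivity)
  have hsum : (d:ℝ)/2 + (p+1) = γ/(γ-1) := by
    rw [hpdef]; unfold nExp; field_simp; ring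
  have hR2pow : R2 ^ ((d:ℝ)/2 + p) = (2*γ/(γ-1)) ^ ((1:ℝ)/(γ-1)) * ρ := by
    have hexp : (d:ℝ)/2 + p = 1/(γ-1) := by rw [hpdef]; unfold nExp; field_simp; ring
    rw [hexp, hR2def, mul_rpow hA.le (rpow_pos_of_pos hρ _).le, ← rpow_mul hρ.le,
      mul_one_div_cancel hγ1.ne', rpow_one]
  have hApow : (2*γ/(γ-1)) ^ (-((1:ℝ)/(γ-1))) * (2*γ/(γ-1)) ^ ((1:ℝ)/(γ-1)) = 1 := by
    rw [← rpow_add hA]; norm_num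
  have hpip : (0:ℝ) < π ^ ((d:ℝ)/2) := by positivity
  rw [step1, step2, step3a, step3b, step3c, hVb, hsum, hR2pow, smul_eq_mul, nsmul_eq_mul, hGd1]
  unfold cConst
  rw [show nExp d γ / 2 + 1 = p + 1 from rfl]
  set B := (2*γ/(γ-1)) ^ ((1:ℝ)/(γ-1)) with hB
  set A := (2*γ/(γ-1)) ^ (-((1:ℝ)/(γ-1))) with hA2
  field_simp
  linear_combination hApow
end
end

section
/- Let d ≥ 1 be an integer, γ ∈ (1, (d+2)/d), ρ > 0 and u ∈ ℝ^d, and let M_{ρ,u} be the positive-part equilibrium function. Then the kinetic entropy of M_{ρ,u} equals the macroscopic entropy: ∫_{ℝ^d} [ (|v|²/2) M_{ρ,u}(v) + (1/(2 c^{2/n})) · M_{ρ,u}(v)^{1+2/n}/(1 + 2/n) ] dv = (1/2) ρ |u|² + ρ^γ/(γ-1). -/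
open MeasureTheory Real

noncomputable section

open Set intervalIntegral

set_option maxHeartbeats 2000000

/-! ### Auxiliary lemmas -/

lemma real_beta {a b : ℝ} (ha : 0 < a) (hb : 0 < b) :
    ∫ x in (0:ℝ)..1, x ^ (a - 1) * (1 - x) ^ (b - 1)
      = Real.Gamma a * Real.Gamma b / Real.Gamma (a + b) := by
  have hab : Real.Gamma (a + b) ≠ 0 := (Real.Gamma_pos_of_pos (by linarith)).ne'
  have key := Complex.Gamma_mul_Gamma_eq_betaIntegral (s := (a:ℂ)) (t := (b:ℂ))
    (by simpa using ha) (by simpa using hb)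
  have hbeta : Complex.betaIntegral a b
      = ((∫ x in (0:ℝ)..1, x ^ (a - 1) * (1 - x) ^ (b - 1) : ℝ) : ℂ) := by
    rw [Complex.betaIntegral, ← intervalIntegral.integral_ofReal]
    refine intervalIntegral.integral_congr fun x hx => ?_
    rw [uIcc_of_le zero_le_one] at hx
    push_cast
    rw [Complex.ofReal_cpow hx.1, Complex.ofReal_cpow (by linarith [hx.2])]
    push_cast
    ring
  rw [hbeta] at key
  have : ((Real.Gamma a * Real.Gamma b : ℝ) : ℂ)
      = ((Real.Gamma (a+b) * ∫ x in (0:ℝ)..1, x ^ (a - 1) * (1 - x) ^ (b - 1) : ℝ) : ℂ) := by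
    push_cast
    rw [← Complex.ofReal_add, Complex.Gamma_ofReal, Complex.Gamma_ofReal,
      Complex.Gamma_ofReal] at key
    exact key
  have := Complex.ofReal_inj.mp this
  field_simp
  linarith [this]

lemma oneD {R p : ℝ} (hR : 0 < R) (hp : 0 < p) (m : ℕ) :
    ∫ y in Ioi (0:ℝ), y ^ m * (max (R^2 - y^2) 0) ^ p
      = R ^ ((m:ℝ) + 1 + 2*p) *
          (Real.Gamma (((m:ℝ)+1)/2) * Real.Gamma (p+1)
            / (2 * Real.Gamma (((m:ℝ)+1)/2 + p + 1))) := by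
  have h1 : (∫ y in Ioi (0:ℝ), y ^ m * (max (R^2 - y^2) 0) ^ p)
      = ∫ y in Ioo (0:ℝ) R, y ^ m * (max (R^2 - y^2) 0) ^ p := by
    have h : ∀ y ∈ Ioi (0:ℝ) \ Ioo 0 R,
        (fun y : ℝ => y ^ m * (max (R^2 - y^2) 0) ^ p) y = 0 := by
      intro y hy
      have hyR : R ≤ y := by
        rcases hy with ⟨hy1, hy2⟩
        simp only [mem_Ioo, not_and, not_lt, mem_Ioi] at hy1 hy2
        exact hy2 hy1
      have h0 : max (R^2 - y^2) 0 = 0 := max_eq_right (by nlinarith)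
      simp only
      rw [h0, Real.zero_rpow hp.ne', mul_zero]
    exact setIntegral_eq_of_subset_of_forall_diff_eq_zero (μ := volume)
      (f := fun y : ℝ => y ^ m * (max (R^2 - y^2) 0) ^ p)
      (s := Ioo 0 R) (t := Ioi 0) measurableSet_Ioi Ioo_subset_Ioi_self h
  -- substitution y = R * sqrt x
  have himg : (fun x => R * Real.sqrt x) '' Ioo 0 1 = Ioo 0 R := by
    ext y
    constructor
    · rintro ⟨x, ⟨hx0, hx1⟩, rfl⟩
      have h0 : 0 < Real.sqrt x := Real.sqrt_pos.mpr hx0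
      have h1 : Real.sqrt x < 1 := by
        rw [show (1:ℝ) = Real.sqrt 1 by simp]
        exact Real.sqrt_lt_sqrt hx0.le hx1
      have : R * Real.sqrt x < R := by nlinarith [mul_lt_mul_of_pos_left h1 hR]
      exact ⟨by positivity, this⟩
    · rintro ⟨hy0, hyR⟩
      refine ⟨(y/R)^2, ⟨by positivity, ?_⟩, ?_⟩
      · have : y / R < 1 := (div_lt_one hR).mpr hyR
        have h0 : 0 < y / R := by positivity
        nlinarith
      · show R * Real.sqrt ((y/R)^2) = y
        rw [Real.sqrt_sq (by positivity)]
        field_simp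
  have hderiv : ∀ x ∈ Ioo (0:ℝ) 1, HasDerivWithinAt (fun x => R * Real.sqrt x)
      (R * (1 / (2 * Real.sqrt x))) (Ioo 0 1) x := fun x hx =>
    ((Real.hasDerivAt_sqrt hx.1.ne').const_mul R).hasDerivWithinAt
  have hinj : InjOn (fun x => R * Real.sqrt x) (Ioo 0 1) := by
    intro a ha b hb h
    have : Real.sqrt a = Real.sqrt b := by
      exact mul_left_cancel₀ hR.ne' h
    have := congrArg (fun t => t^2) this
    simpa [Real.sq_sqrt ha.1.le, Real.sq_sqrt hb.1.le] using this
  have h2 := integral_image_eq_integral_abs_deriv_smul measurableSet_Ioo hderiv hinj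
      (fun y => y ^ m * (max (R^2 - y^2) 0) ^ p)
  rw [himg] at h2
  rw [h1, h2]
  have h3 : ∀ x ∈ Ioo (0:ℝ) 1,
      |R * (1 / (2 * Real.sqrt x))| • ((R * Real.sqrt x) ^ m
        * (max (R^2 - (R * Real.sqrt x)^2) 0) ^ p)
      = (R ^ ((m:ℝ) + 1 + 2*p) / 2) * (x ^ (((m:ℝ)+1)/2 - 1) * (1-x) ^ ((p+1) - 1)) := by
    intro x hx
    obtain ⟨hx0, hx1⟩ := hx
    have hs0 : 0 < Real.sqrt x := Real.sqrt_pos.mpr hx0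
    have habs : |R * (1 / (2 * Real.sqrt x))| = R * (1 / (2 * Real.sqrt x)) := by
      rw [abs_of_pos]; positivity
    have hsq : (R * Real.sqrt x)^2 = R^2 * x := by
      rw [mul_pow, Real.sq_sqrt hx0.le]
    have hmax : max (R^2 - (R * Real.sqrt x)^2) 0 = R^2 * (1 - x) := by
      rw [hsq, max_eq_left (by nlinarith)]; ring
    have hpm : (R * Real.sqrt x) ^ m = R ^ (m:ℝ) * x ^ ((m:ℝ)/2) := by
      rw [mul_pow, ← Real.rpow_natCast R m, ← Real.rpow_natCast (Real.sqrt x) m,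
        Real.sqrt_eq_rpow, ← Real.rpow_mul hx0.le]
      ring_nf
    have hmp : (R^2 * (1 - x)) ^ p = R ^ (2*p) * (1-x)^p := by
      rw [Real.mul_rpow (by positivity) (by linarith), ← Real.rpow_natCast R 2,
        ← Real.rpow_mul hR.le]
      norm_num
    rw [smul_eq_mul, habs, hmax, hpm, hmp, Real.sqrt_eq_rpow]
    rw [show R ^ ((m:ℝ) + 1 + 2*p) = R ^ (m:ℝ) * R ^ (1:ℝ) * R ^ (2*p) by
      rw [← Real.rpow_add hR, ← Real.rpow_add hR]]
    rw [show x ^ (((m:ℝ)+1)/2 - 1) = x ^ ((m:ℝ)/2) / x ^ ((1:ℝ)/2) by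
      rw [← Real.rpow_sub hx0]
      congr 1
      ring]
    rw [Real.rpow_one, show (p+1) - 1 = p by ring]
    have hne : (x:ℝ) ^ ((1:ℝ)/2) ≠ 0 := by positivity
    field_simp
  rw [setIntegral_congr_fun measurableSet_Ioo h3, MeasureTheory.integral_const_mul,
    ← integral_Ioc_eq_integral_Ioo, ← intervalIntegral.integral_of_le zero_le_one,
    real_beta (by positivity) (by linarith),
    show ((m:ℝ)+1)/2 + (p+1) = ((m:ℝ)+1)/2 + p + 1 by ring]
  ring

lemma radial (d : ℕ) (hd : 1 ≤ d) (m : ℕ) {R p : ℝ} (hR : 0 < R) (hp : 0 < p) :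
    ∫ w : EuclideanSpace ℝ (Fin d), ‖w‖ ^ m * (max (R^2 - ‖w‖^2) 0) ^ p
      = (d : ℝ) * (Real.sqrt π ^ d / Real.Gamma ((d:ℝ)/2 + 1)) *
          (R ^ ((d:ℝ) + m + 2*p) * (Real.Gamma (((d:ℝ)+m)/2) * Real.Gamma (p+1)
            / (2 * Real.Gamma (((d:ℝ)+m)/2 + p + 1)))) := by
  haveI : Nonempty (Fin d) := ⟨⟨0, hd⟩⟩
  haveI : Nontrivial (EuclideanSpace ℝ (Fin d)) := inferInstance
  have hdim : Module.finrank ℝ (EuclideanSpace ℝ (Fin d)) = d := finrank_euclideanSpace_fin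
  have key := MeasureTheory.integral_fun_norm_addHaar (volume : Measure (EuclideanSpace ℝ (Fin d)))
    (fun r : ℝ => r ^ m * (max (R^2 - r^2) 0) ^ p)
  rw [hdim] at key
  rw [key]
  have hvol : (volume (Metric.ball (0 : EuclideanSpace ℝ (Fin d)) 1)).toReal
      = Real.sqrt π ^ d / Real.Gamma ((d:ℝ)/2 + 1) := by
    rw [EuclideanSpace.volume_ball]
    simp [Fintype.card_fin,
      ENNReal.toReal_ofReal (by positivity : (0:ℝ) ≤ Real.sqrt π ^ d / Real.Gamma ((d:ℝ)/2 + 1))]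
  rw [measureReal_def, hvol]
  have hiy : ∫ y in Ioi (0:ℝ), y ^ (d - 1) • (y ^ m * (max (R^2 - y^2) 0) ^ p)
      = ∫ y in Ioi (0:ℝ), y ^ (d - 1 + m) * (max (R^2 - y^2) 0) ^ p := by
    refine setIntegral_congr_fun measurableSet_Ioi fun y hy => ?_
    rw [smul_eq_mul, pow_add]
    ring
  rw [hiy, oneD hR hp (d - 1 + m)]
  have hcast : ((d - 1 + m : ℕ) : ℝ) = (d : ℝ) + m - 1 := by
    push_cast [Nat.cast_sub hd]
    ring
  rw [hcast]
  rw [show (d:ℝ) + m - 1 + 1 + 2*p = (d:ℝ) + m + 2*p by ring,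
    show ((d:ℝ) + m - 1 + 1)/2 = ((d:ℝ)+m)/2 by ring]
  rw [nsmul_eq_mul, smul_eq_mul]
  ring

lemma n_pos (d : ℕ) (hd : 1 ≤ d) {γ : ℝ} (hγ : 1 < γ) (hγ' : γ < ((d : ℝ) + 2) / d) :
    0 < nExp d γ := by
  have hd' : (0:ℝ) < d := by exact_mod_cast hd
  have h1 : 0 < γ - 1 := by linarith
  have h2 : γ * d < d + 2 := by
    have := (lt_div_iff₀ hd').mp hγ'
    linarith
  have : (d:ℝ) < 2 / (γ - 1) := (lt_div_iff₀ h1).mpr (by nlinarith)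
  unfold nExp
  linarith

lemma sqrtpi_pow (d : ℕ) : Real.sqrt π ^ d = π ^ ((d:ℝ)/2) := by
  rw [Real.sqrt_eq_rpow, ← Real.rpow_natCast (π ^ ((1:ℝ)/2)) d, ← Real.rpow_mul pi_pos.le]
  congr 1
  ring

lemma intA (d : ℕ) (hd : 1 ≤ d) {γ ρ : ℝ} (hγ : 1 < γ) (hγ' : γ < ((d : ℝ) + 2) / d)
    (hρ : 0 < ρ) :
    cConst d γ * ∫ w : EuclideanSpace ℝ (Fin d),
        (max (2*γ/(γ-1)*ρ^(γ-1) - ‖w‖^2) 0) ^ (nExp d γ / 2) = ρ := by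
  have hg1 : 0 < γ - 1 := by linarith
  have hd0 : (0:ℝ) < d := by exact_mod_cast hd
  have hn : 0 < nExp d γ := n_pos d hd hγ hγ'
  have hp : 0 < nExp d γ / 2 := by linarith
  have ht : 0 < ρ ^ (γ-1) := Real.rpow_pos_of_pos hρ _
  have hbase : 0 < 2*γ/(γ-1) := div_pos (by linarith) hg1
  have hR2 : 0 < 2*γ/(γ-1)*ρ^(γ-1) := mul_pos hbase ht
  have hRR : (Real.sqrt (2*γ/(γ-1)*ρ^(γ-1)))^2 = 2*γ/(γ-1)*ρ^(γ-1) := Real.sq_sqrt hR2.le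
  have hR : 0 < Real.sqrt (2*γ/(γ-1)*ρ^(γ-1)) := Real.sqrt_pos.mpr hR2
  rw [show (2*γ/(γ-1)*ρ^(γ-1)) = (Real.sqrt (2*γ/(γ-1)*ρ^(γ-1)))^2 from hRR.symm]
  have hrad := radial d hd 0 hR hp
  simp only [pow_zero, one_mul, Nat.cast_zero, add_zero] at hrad
  rw [hrad]
  have h1 : Real.sqrt π ^ d = π ^ ((d:ℝ)/2) := sqrtpi_pow d
  have h2 : Real.sqrt (2*γ/(γ-1)*ρ^(γ-1)) ^ ((d:ℝ) + 2*(nExp d γ / 2))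
      = (2*γ/(γ-1))^(1/(γ-1)) * ρ := by
    rw [Real.sqrt_eq_rpow, ← Real.rpow_mul hR2.le,
      show (1:ℝ)/2 * ((d:ℝ) + 2*(nExp d γ / 2)) = 1/(γ-1) by unfold nExp; ring,
      Real.mul_rpow hbase.le ht.le, ← Real.rpow_mul hρ.le,
      mul_one_div_cancel hg1.ne', Real.rpow_one]
  rw [show (d:ℝ)/2 + nExp d γ/2 + 1 = γ/(γ-1) from by
    unfold nExp; field_simp; ring]
  rw [h1, h2]
  unfold cConst
  rw [Real.rpow_neg hbase.le]
  have hG : 0 < (2*γ/(γ-1))^(1/(γ-1)) := Real.rpow_pos_of_pos hbase _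
  have hgam2 : 0 < Real.Gamma (γ/(γ-1)) := Real.Gamma_pos_of_pos (div_pos (by linarith) hg1)
  have hgam3 : 0 < Real.Gamma (nExp d γ/2+1) := Real.Gamma_pos_of_pos (by linarith)
  have hgam4 : 0 < Real.Gamma ((d:ℝ)/2) := Real.Gamma_pos_of_pos (by positivity)
  have hpi : (0:ℝ) < π ^ ((d:ℝ)/2) := Real.rpow_pos_of_pos pi_pos _
  have h5 : Real.Gamma ((d:ℝ)/2+1) = ((d:ℝ)/2) * Real.Gamma ((d:ℝ)/2) :=
    Real.Gamma_add_one (by positivity)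
  rw [h5]
  field_simp

lemma intB (d : ℕ) (hd : 1 ≤ d) {γ ρ : ℝ} (hγ : 1 < γ) (hγ' : γ < ((d : ℝ) + 2) / d)
    (hρ : 0 < ρ) :
    cConst d γ * ∫ w : EuclideanSpace ℝ (Fin d),
        ‖w‖^2 * (max (2*γ/(γ-1)*ρ^(γ-1) - ‖w‖^2) 0) ^ (nExp d γ / 2)
      = (d:ℝ) * (2*γ/(γ-1)*ρ^(γ-1)) * ρ * (γ-1) / (2*γ) := by
  have hg1 : 0 < γ - 1 := by linarith
  have hd0 : (0:ℝ) < d := by exact_mod_cast hd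
  have hn : 0 < nExp d γ := n_pos d hd hγ hγ'
  have hp : 0 < nExp d γ / 2 := by linarith
  have ht : 0 < ρ ^ (γ-1) := Real.rpow_pos_of_pos hρ _
  have hbase : 0 < 2*γ/(γ-1) := div_pos (by linarith) hg1
  have hR2 : 0 < 2*γ/(γ-1)*ρ^(γ-1) := mul_pos hbase ht
  have hRR : (Real.sqrt (2*γ/(γ-1)*ρ^(γ-1)))^2 = 2*γ/(γ-1)*ρ^(γ-1) := Real.sq_sqrt hR2.le
  have hR : 0 < Real.sqrt (2*γ/(γ-1)*ρ^(γ-1)) := Real.sqrt_pos.mpr hR2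
  have hrad := radial d hd 2 hR hp
  rw [hRR] at hrad
  rw [hrad]
  have h1 : Real.sqrt π ^ d = π ^ ((d:ℝ)/2) := sqrtpi_pow d
  have h2 : Real.sqrt (2*γ/(γ-1)*ρ^(γ-1)) ^ ((d:ℝ) + (2:ℕ) + 2*(nExp d γ / 2))
      = (2*γ/(γ-1))^(1/(γ-1)) * ρ * (2*γ/(γ-1)*ρ^(γ-1)) := by
    rw [Real.sqrt_eq_rpow, ← Real.rpow_mul hR2.le,
      show (1:ℝ)/2 * ((d:ℝ) + (2:ℕ) + 2*(nExp d γ / 2)) = 1/(γ-1) + 1 by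
        unfold nExp; push_cast; ring,
      Real.rpow_add hR2, Real.rpow_one,
      Real.mul_rpow hbase.le ht.le, ← Real.rpow_mul hρ.le,
      mul_one_div_cancel hg1.ne', Real.rpow_one]
  rw [show ((d:ℝ)+(2:ℕ))/2 + nExp d γ/2 + 1 = γ/(γ-1) + 1 from by
    unfold nExp; push_cast; field_simp; ring]
  rw [show ((d:ℝ)+(2:ℕ))/2 = (d:ℝ)/2 + 1 from by push_cast; ring]
  rw [h1, h2]
  unfold cConst
  rw [Real.rpow_neg hbase.le]
  have hG : 0 < (2*γ/(γ-1))^(1/(γ-1)) := Real.rpow_pos_of_pos hbase _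
  have hgam2 : 0 < Real.Gamma (γ/(γ-1)) := Real.Gamma_pos_of_pos (div_pos (by linarith) hg1)
  have hgam3 : 0 < Real.Gamma (nExp d γ/2+1) := Real.Gamma_pos_of_pos (by linarith)
  have hgam1 : 0 < Real.Gamma ((d:ℝ)/2+1) := Real.Gamma_pos_of_pos (by positivity)
  have hpi : (0:ℝ) < π ^ ((d:ℝ)/2) := Real.rpow_pos_of_pos pi_pos _
  have h5 : Real.Gamma (γ/(γ-1)+1) = (γ/(γ-1)) * Real.Gamma (γ/(γ-1)) :=
    Real.Gamma_add_one (by positivity)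
  rw [h5]
  field_simp

lemma cConst_pos (d : ℕ) {γ : ℝ} (hγ : 1 < γ) (hn : 0 < nExp d γ) : 0 < cConst d γ := by
  have hg1 : 0 < γ - 1 := by linarith
  have hbase : 0 < 2*γ/(γ-1) := div_pos (by linarith) hg1
  unfold cConst
  have h1 : 0 < (2*γ/(γ-1)) ^ (-(1/(γ-1))) := Real.rpow_pos_of_pos hbase _
  have h2 := Real.Gamma_pos_of_pos (div_pos (by linarith : (0:ℝ) < γ) hg1)
  have h3 := Real.Gamma_pos_of_pos (show 0 < nExp d γ/2+1 by linarith)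
  have h4 : (0:ℝ) < π ^ ((d:ℝ)/2) := Real.rpow_pos_of_pos pi_pos _
  positivity

lemma integrable_aux (d : ℕ) {p : ℝ} (hp : 0 < p) (A : ℝ)
    (φ : EuclideanSpace ℝ (Fin d) → ℝ) (hφ : Continuous φ) :
    Integrable (fun w : EuclideanSpace ℝ (Fin d) => φ w * (max (A - ‖w‖^2) 0) ^ p) := by
  have hcont : Continuous fun w : EuclideanSpace ℝ (Fin d) => (max (A - ‖w‖^2) 0) ^ p := by
    apply Continuous.rpow_const
    · exact (continuous_const.sub (continuous_norm.pow 2)).max continuous_const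
    · exact fun x => Or.inr hp.le
  apply (hφ.mul hcont).integrable_of_hasCompactSupport
  apply HasCompactSupport.intro
    (isCompact_closedBall (0 : EuclideanSpace ℝ (Fin d)) (Real.sqrt (max A 0)))
  intro x hx
  simp only [Metric.mem_closedBall, dist_zero_right, not_le] at hx
  have h1 : max A 0 < ‖x‖^2 := by
    have h := Real.sq_sqrt (le_max_right A 0)
    nlinarith [Real.sqrt_nonneg (max A 0), norm_nonneg x]
  have h2 : max (A - ‖x‖^2) 0 = 0 := max_eq_right (by
    have := le_max_left A 0
    linarith)
  show φ x * (max (A - ‖x‖^2) 0)^p = 0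
  rw [h2, Real.zero_rpow hp.ne', mul_zero]

lemma cross_zero (d : ℕ) (A p : ℝ) (u : EuclideanSpace ℝ (Fin d)) :
    ∫ w : EuclideanSpace ℝ (Fin d), inner ℝ w u * (max (A - ‖w‖^2) 0) ^ p = 0 := by
  have h := MeasureTheory.integral_neg_eq_self
      (fun w : EuclideanSpace ℝ (Fin d) => inner ℝ w u * (max (A - ‖w‖^2) 0) ^ p)
      (volume : Measure (EuclideanSpace ℝ (Fin d)))
  simp only [inner_neg_left, norm_neg, neg_mul] at h
  rw [MeasureTheory.integral_neg] at h
  linarith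

lemma final_algebra {D γ ρ t c u2 n : ℝ} (hg1 : 0 < γ - 1) (hγ0 : 0 < γ) (hc : c ≠ 0)
    (hn : 0 < n) (hrel : n = 2/(γ-1) - D) :
    (c/2 - c/(2*(1+2/n))) * (D*(2*γ/(γ-1)*t)*ρ*(γ-1)/(2*γ)/c)
      + (c/2*u2 + c/(2*(1+2/n))*(2*γ/(γ-1)*t)) * (ρ/c)
      = 1/2*ρ*u2 + ρ*t/(γ-1) := by
  have hn2 : 0 < n + 2 := by linarith
  have e1 : 1 + 2/n = (n+2)/n := by field_simp
  rw [e1]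
  have e2 : c/(2*((n+2)/n)) = c*n/(2*(n+2)) := by
    rw [div_eq_div_iff (by positivity) (by positivity)]
    field_simp
  rw [e2]
  have hD : D = 2/(γ-1) - n := by linarith
  subst hD
  field_simp
  ring

/-- The kinetic entropy of the positive-part equilibrium function equals the macroscopic
entropy:
`∫ (|v|²/2) M_{ρ,u} + (1/(2 c^{2/n})) M_{ρ,u}^{1+2/n}/(1+2/n) dv = ρ|u|²/2 + ρ^γ/(γ-1)`. -/
theorem entropy_Mpos (d : ℕ) (hd : 1 ≤ d) (γ : ℝ) (hγ : 1 < γ)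
    (hγ' : γ < ((d : ℝ) + 2) / (d : ℝ)) (ρ : ℝ) (hρ : 0 < ρ)
    (u : EuclideanSpace ℝ (Fin d)) :
    (∫ v : EuclideanSpace ℝ (Fin d),
        (‖v‖ ^ 2 / 2 * Mpos d γ ρ u v
          + 1 / (2 * cConst d γ ^ (2 / nExp d γ)) *
              (Mpos d γ ρ u v ^ (1 + 2 / nExp d γ) / (1 + 2 / nExp d γ))))
      = 1 / 2 * ρ * ‖u‖ ^ 2 + ρ ^ γ / (γ - 1) := by
  have hg1 : 0 < γ - 1 := by linarith
  have hn : 0 < nExp d γ := n_pos d hd hγ hγ'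
  have hnne : nExp d γ ≠ 0 := hn.ne'
  have hn2 : 0 < 1 + 2 / nExp d γ := by positivity
  have hc : 0 < cConst d γ := cConst_pos d hγ hn
  have hp : 0 < nExp d γ / 2 := by linarith
  -- step 1 : pointwise rewrite of the integrand
  have hpt : ∀ v : EuclideanSpace ℝ (Fin d),
      ‖v‖ ^ 2 / 2 * Mpos d γ ρ u v
          + 1 / (2 * cConst d γ ^ (2 / nExp d γ)) *
              (Mpos d γ ρ u v ^ (1 + 2 / nExp d γ) / (1 + 2 / nExp d γ))
      = cConst d γ / 2 *
          (‖v‖ ^ 2 * (max (2 * γ / (γ - 1) * ρ ^ (γ - 1) - ‖v - u‖ ^ 2) 0) ^ (nExp d γ / 2))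
        + cConst d γ / (2 * (1 + 2 / nExp d γ)) *
          ((2 * γ / (γ - 1) * ρ ^ (γ - 1) - ‖v - u‖ ^ 2) *
            (max (2 * γ / (γ - 1) * ρ ^ (γ - 1) - ‖v - u‖ ^ 2) 0) ^ (nExp d γ / 2)) := by
    intro v
    unfold Mpos
    set X := max (2 * γ / (γ - 1) * ρ ^ (γ - 1) - ‖v - u‖ ^ 2) 0 with hX
    have hX0 : 0 ≤ X := le_max_right _ _
    have e1 : (cConst d γ * X ^ (nExp d γ / 2)) ^ (1 + 2 / nExp d γ)
        = cConst d γ ^ (1 + 2 / nExp d γ) * (X ^ (nExp d γ / 2)) ^ (1 + 2 / nExp d γ) :=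
      Real.mul_rpow hc.le (Real.rpow_nonneg hX0 _)
    have e2 : (X ^ (nExp d γ / 2)) ^ (1 + 2 / nExp d γ) = X ^ (nExp d γ / 2 + 1) := by
      rw [← Real.rpow_mul hX0]
      congr 1
      field_simp
    have e3 : X ^ (nExp d γ / 2 + 1)
        = (2 * γ / (γ - 1) * ρ ^ (γ - 1) - ‖v - u‖ ^ 2) * X ^ (nExp d γ / 2) := by
      rcases hX0.eq_or_lt with h | h
      · rw [← h, Real.zero_rpow (by linarith : nExp d γ / 2 + 1 ≠ 0),
          Real.zero_rpow hp.ne', mul_zero]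
      · have hargle : 0 ≤ 2 * γ / (γ - 1) * ρ ^ (γ - 1) - ‖v - u‖ ^ 2 := by
          by_contra hcon
          push_neg at hcon
          rw [hX, max_eq_right hcon.le] at h
          exact lt_irrefl 0 h
        have harg : X = 2 * γ / (γ - 1) * ρ ^ (γ - 1) - ‖v - u‖ ^ 2 := by
          rw [hX]; exact max_eq_left hargle
        rw [Real.rpow_add h, Real.rpow_one, harg]
        ring
    have e4 : cConst d γ ^ (1 + 2 / nExp d γ)
        = cConst d γ * cConst d γ ^ (2 / nExp d γ) := by
      rw [Real.rpow_add hc, Real.rpow_one]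
    rw [e1, e2, e3, e4]
    have hcp : (0:ℝ) < cConst d γ ^ (2 / nExp d γ) := Real.rpow_pos_of_pos hc _
    field_simp
  simp only [hpt]
  -- step 2 : translate by u
  rw [← MeasureTheory.integral_add_right_eq_self (μ := volume)
    (fun v : EuclideanSpace ℝ (Fin d) => cConst d γ / 2 *
          (‖v‖ ^ 2 * (max (2 * γ / (γ - 1) * ρ ^ (γ - 1) - ‖v - u‖ ^ 2) 0) ^ (nExp d γ / 2))
        + cConst d γ / (2 * (1 + 2 / nExp d γ)) *
          ((2 * γ / (γ - 1) * ρ ^ (γ - 1) - ‖v - u‖ ^ 2) *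
            (max (2 * γ / (γ - 1) * ρ ^ (γ - 1) - ‖v - u‖ ^ 2) 0) ^ (nExp d γ / 2))) u]
  simp only [add_sub_cancel_right]
  -- step 3 : expand the square of the norm
  have hpt2 : ∀ w : EuclideanSpace ℝ (Fin d),
      cConst d γ / 2 *
          (‖w + u‖ ^ 2 * (max (2 * γ / (γ - 1) * ρ ^ (γ - 1) - ‖w‖ ^ 2) 0) ^ (nExp d γ / 2))
        + cConst d γ / (2 * (1 + 2 / nExp d γ)) *
          ((2 * γ / (γ - 1) * ρ ^ (γ - 1) - ‖w‖ ^ 2) *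
            (max (2 * γ / (γ - 1) * ρ ^ (γ - 1) - ‖w‖ ^ 2) 0) ^ (nExp d γ / 2))
      = (cConst d γ / 2 - cConst d γ / (2 * (1 + 2 / nExp d γ))) *
          (‖w‖ ^ 2 * (max (2 * γ / (γ - 1) * ρ ^ (γ - 1) - ‖w‖ ^ 2) 0) ^ (nExp d γ / 2))
        + cConst d γ *
          (inner ℝ w u * (max (2 * γ / (γ - 1) * ρ ^ (γ - 1) - ‖w‖ ^ 2) 0) ^ (nExp d γ / 2))
        + (cConst d γ / 2 * ‖u‖ ^ 2
            + cConst d γ / (2 * (1 + 2 / nExp d γ)) * (2 * γ / (γ - 1) * ρ ^ (γ - 1))) *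
          ((max (2 * γ / (γ - 1) * ρ ^ (γ - 1) - ‖w‖ ^ 2) 0) ^ (nExp d γ / 2)) := by
    intro w
    rw [norm_add_sq_real]
    ring
  simp only [hpt2]
  -- step 4 : split the integral
  have hint2 : Integrable (fun w : EuclideanSpace ℝ (Fin d) =>
      ‖w‖ ^ 2 * (max (2 * γ / (γ - 1) * ρ ^ (γ - 1) - ‖w‖ ^ 2) 0) ^ (nExp d γ / 2)) :=
    integrable_aux d hp _ _ (continuous_norm.pow 2)
  have hintc : Integrable (fun w : EuclideanSpace ℝ (Fin d) =>
      inner ℝ w u * (max (2 * γ / (γ - 1) * ρ ^ (γ - 1) - ‖w‖ ^ 2) 0) ^ (nExp d γ / 2)) :=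
    integrable_aux d hp _ _ (continuous_id.inner continuous_const)
  have hint0 : Integrable (fun w : EuclideanSpace ℝ (Fin d) =>
      (max (2 * γ / (γ - 1) * ρ ^ (γ - 1) - ‖w‖ ^ 2) 0) ^ (nExp d γ / 2)) := by
    simpa using integrable_aux d hp (2 * γ / (γ - 1) * ρ ^ (γ - 1))
      (fun _ => (1:ℝ)) continuous_const
  have hsum : Integrable (fun w : EuclideanSpace ℝ (Fin d) =>
      (cConst d γ / 2 - cConst d γ / (2 * (1 + 2 / nExp d γ))) *
          (‖w‖ ^ 2 * (max (2 * γ / (γ - 1) * ρ ^ (γ - 1) - ‖w‖ ^ 2) 0) ^ (nExp d γ / 2))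
        + cConst d γ *
          (inner ℝ w u * (max (2 * γ / (γ - 1) * ρ ^ (γ - 1) - ‖w‖ ^ 2) 0) ^ (nExp d γ / 2)))
      volume := (hint2.const_mul _).add (hintc.const_mul _)
  rw [MeasureTheory.integral_add hsum (hint0.const_mul _),
    MeasureTheory.integral_add (hint2.const_mul _) (hintc.const_mul _),
    MeasureTheory.integral_const_mul, MeasureTheory.integral_const_mul,
    MeasureTheory.integral_const_mul]
  rw [cross_zero d (2 * γ / (γ - 1) * ρ ^ (γ - 1)) (nExp d γ / 2) u, mul_zero, add_zero]
  -- step 5 : evaluate the two remaining integrals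
  have hA := intA d hd hγ hγ' hρ
  have hB := intB d hd hγ hγ' hρ
  have hI0 : (∫ w : EuclideanSpace ℝ (Fin d),
      (max (2 * γ / (γ - 1) * ρ ^ (γ - 1) - ‖w‖ ^ 2) 0) ^ (nExp d γ / 2)) = ρ / cConst d γ := by
    rw [eq_div_iff hc.ne', mul_comm]
    exact hA
  have hI2 : (∫ w : EuclideanSpace ℝ (Fin d),
      ‖w‖ ^ 2 * (max (2 * γ / (γ - 1) * ρ ^ (γ - 1) - ‖w‖ ^ 2) 0) ^ (nExp d γ / 2))
      = ((d:ℝ) * (2*γ/(γ-1)*ρ^(γ-1)) * ρ * (γ-1) / (2*γ)) / cConst d γ := by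
    rw [eq_div_iff hc.ne', mul_comm]
    exact hB
  rw [hI0, hI2]
  -- step 6 : final algebra
  have hργ : ρ ^ γ = ρ * ρ ^ (γ - 1) := by
    have h := Real.rpow_add hρ 1 (γ - 1)
    rw [show (1:ℝ) + (γ - 1) = γ by ring, Real.rpow_one] at h
    exact h
  rw [hργ]
  exact final_algebra hg1 (by linarith) hc.ne' hn rfl
end
end

section
/- Let d ≥ 1 be an integer. There is a constant C > 0 depending only on d such that for every measurable function f : ℝ^d × ℝ^d → [0,∞) which is essentially bounded and satisfies ∬_{ℝ^d × ℝ^d} |v|² f(x,v) dx dv < ∞, the local density ρ_f(x) = ∫_{ℝ^d} f(x,v) dv satisfies ( ∫_{ℝ^d} ρ_f(x)^{(d+2)/d} dx )^{d/(d+2)} ≤ C ‖f‖_{L^∞}^{2/(d+2)} ( ∬_{ℝ^d × ℝ^d} |v|² f(x,v) dx dv )^{d/(d+2)}. -/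
open MeasureTheory Real Metric

noncomputable section

lemma rpow_opt (d : ℕ) {a b : ℝ} (ha : 0 < a) (hb : 0 < b) :
    a * ((b / a) ^ ((1:ℝ) / ((d:ℝ)+2))) ^ ((d:ℝ)) +
      b / ((b / a) ^ ((1:ℝ) / ((d:ℝ)+2))) ^ (2:ℕ) =
    2 * a ^ ((2:ℝ) / ((d:ℝ)+2)) * b ^ ((d:ℝ) / ((d:ℝ)+2)) := by
  have hδ : (0:ℝ) < (d:ℝ) + 2 := by positivity
  have hs : (0:ℝ) < b / a := div_pos hb ha
  rw [← Real.rpow_natCast ((b / a) ^ ((1:ℝ) / ((d:ℝ)+2))) 2]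
  rw [← Real.rpow_mul hs.le, ← Real.rpow_mul hs.le]
  push_cast
  have e1 : (1:ℝ) / ((d:ℝ)+2) * (d:ℝ) = (d:ℝ) / ((d:ℝ)+2) := by ring
  have e2 : (1:ℝ) / ((d:ℝ)+2) * (2:ℝ) = (2:ℝ) / ((d:ℝ)+2) := by ring
  rw [e1, e2, Real.div_rpow hb.le ha.le, Real.div_rpow hb.le ha.le]
  have hat : (0:ℝ) < a ^ ((d:ℝ)/((d:ℝ)+2)) := Real.rpow_pos_of_pos ha _
  have hbu : (0:ℝ) < b ^ ((2:ℝ)/((d:ℝ)+2)) := Real.rpow_pos_of_pos hb _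
  have h1 : a * (b ^ ((d:ℝ)/((d:ℝ)+2)) / a ^ ((d:ℝ)/((d:ℝ)+2)))
      = a ^ ((2:ℝ)/((d:ℝ)+2)) * b ^ ((d:ℝ)/((d:ℝ)+2)) := by
    have : a ^ ((2:ℝ)/((d:ℝ)+2)) = a ^ ((1:ℝ) - (d:ℝ)/((d:ℝ)+2)) := by
      congr 1; field_simp; ring
    rw [this, Real.rpow_sub ha, Real.rpow_one]; ring
  have h2 : b / (b ^ ((2:ℝ)/((d:ℝ)+2)) / a ^ ((2:ℝ)/((d:ℝ)+2)))
      = a ^ ((2:ℝ)/((d:ℝ)+2)) * b ^ ((d:ℝ)/((d:ℝ)+2)) := by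
    have hb' : b ^ ((d:ℝ)/((d:ℝ)+2)) = b ^ ((1:ℝ) - (2:ℝ)/((d:ℝ)+2)) := by
      congr 1; field_simp; ring
    rw [hb', Real.rpow_sub hb, Real.rpow_one]
    field_simp
  rw [h1, h2]; ring

set_option maxHeartbeats 1000000 in
lemma slice_bound (d : ℕ) (hd : 1 ≤ d) {g : EuclideanSpace ℝ (Fin d) → ℝ}
    (hg : Measurable g) (hg0 : ∀ v, 0 ≤ g v) {M : ℝ} (hM : 0 < M)
    (hgM : ∀ᵐ v, g v ≤ M)
    (hint : Integrable (fun v => ‖v‖ ^ 2 * g v)) :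
    ∫ v, g v ≤ 2 * (M * (volume (ball (0 : EuclideanSpace ℝ (Fin d)) 1)).toReal)
        ^ ((2:ℝ) / ((d:ℝ)+2)) *
      (∫ v, ‖v‖ ^ 2 * g v) ^ ((d:ℝ) / ((d:ℝ)+2)) := by
  haveI : Nonempty (Fin d) := ⟨⟨0, hd⟩⟩
  haveI : Nontrivial (EuclideanSpace ℝ (Fin d)) := inferInstanceAs (Nontrivial (PiLp 2 fun _ : Fin d => ℝ))
  set κ : ℝ := (volume (ball (0 : EuclideanSpace ℝ (Fin d)) 1)).toReal with hκdef
  have hκ : 0 < κ :=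
    ENNReal.toReal_pos (measure_ball_pos volume _ one_pos).ne' measure_ball_lt_top.ne
  set e : ℝ := ∫ v, ‖v‖ ^ 2 * g v with he
  have he0 : 0 ≤ e := integral_nonneg fun v => mul_nonneg (by positivity) (hg0 v)
  rcases he0.eq_or_lt with heq | hepos
  · -- e = 0 : g = 0 a.e.
    have hz : (fun v => ‖v‖ ^ 2 * g v) =ᵐ[volume] 0 :=
      (integral_eq_zero_iff_of_nonneg (fun v => mul_nonneg (by positivity) (hg0 v)) hint).mp
        heq.symm
    have hne : ∀ᵐ v : EuclideanSpace ℝ (Fin d) ∂volume, v ≠ 0 := by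
      rw [ae_iff]
      have : {v : EuclideanSpace ℝ (Fin d) | ¬ v ≠ 0} = {(0 : EuclideanSpace ℝ (Fin d))} := by ext v; simp
      rw [this, measure_singleton]
    have hg0' : g =ᵐ[volume] 0 := by
      filter_upwards [hz, hne] with v hv hv0
      have hnv : (0:ℝ) < ‖v‖ ^ 2 := pow_pos (norm_pos_iff.mpr hv0) 2
      have : ‖v‖ ^ 2 * g v = 0 := hv
      simpa [hnv.ne'] using this
    rw [integral_congr_ae hg0']
    simp only [Pi.zero_apply, integral_zero]
    rw [← heq]
    have hd0 : (0:ℝ) < (d:ℝ) := by exact_mod_cast hd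
    have : (0:ℝ) ^ ((d:ℝ) / ((d:ℝ)+2)) = 0 :=
      Real.zero_rpow (ne_of_gt (div_pos hd0 (by positivity)))
    rw [this, mul_zero]
  · -- main case
    have haMκ : 0 < M * κ := mul_pos hM hκ
    set R : ℝ := (e / (M * κ)) ^ ((1:ℝ) / ((d:ℝ)+2)) with hRdef
    have hR : 0 < R := Real.rpow_pos_of_pos (div_pos hepos haMκ) _
    -- integrability of g
    have hgsm : AEStronglyMeasurable g volume := hg.aestronglyMeasurable
    have i1 : IntegrableOn g (ball (0:EuclideanSpace ℝ (Fin d)) R) volume := by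
      apply Measure.integrableOn_of_bounded (M := M) measure_ball_lt_top.ne hgsm
      filter_upwards [ae_restrict_of_ae hgM] with v hv
      rw [Real.norm_of_nonneg (hg0 v)]; exact hv
    have hcm : MeasurableSet ((ball (0:EuclideanSpace ℝ (Fin d)) R)ᶜ) := measurableSet_ball.compl
    have hptc : ∀ v ∈ (ball (0:EuclideanSpace ℝ (Fin d)) R)ᶜ, g v ≤ (1 / R ^ 2) * (‖v‖ ^ 2 * g v) := by
      intro v hv
      have hRv : R ≤ ‖v‖ := by
        simpa [dist_eq_norm] using (not_lt.mp (fun h => hv (mem_ball_zero_iff.mpr h)))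
      have h2 : R ^ 2 ≤ ‖v‖ ^ 2 := by nlinarith
      have hR2 : (0:ℝ) < R ^ 2 := pow_pos hR 2
      rw [one_div, inv_mul_eq_div, le_div_iff₀ hR2]
      nlinarith [mul_le_mul_of_nonneg_left h2 (hg0 v)]
    have i2 : IntegrableOn g ((ball (0:EuclideanSpace ℝ (Fin d)) R)ᶜ) volume := by
      apply Integrable.mono ((hint.const_mul (1 / R ^ 2)).restrict) hgsm.restrict
      rw [ae_restrict_iff' hcm]
      refine Filter.Eventually.of_forall fun v hv => ?_
      rw [Real.norm_of_nonneg (hg0 v), Real.norm_of_nonneg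
        (mul_nonneg (by positivity) (mul_nonneg (by positivity) (hg0 v)))]
      exact hptc v hv
    have itot : Integrable g volume := by
      have := i1.union i2
      rwa [Set.union_compl_self, integrableOn_univ] at this
    -- split
    have hsplit : ∫ v, g v = (∫ v in ball (0:EuclideanSpace ℝ (Fin d)) R, g v) + ∫ v in (ball (0:EuclideanSpace ℝ (Fin d)) R)ᶜ, g v :=
      (integral_add_compl measurableSet_ball itot).symm
    -- bound 1
    have hvolball : (volume (ball (0:EuclideanSpace ℝ (Fin d)) R)).toReal = R ^ d * κ := by
      rw [Measure.addHaar_ball_of_pos volume (0:EuclideanSpace ℝ (Fin d)) hR, ENNReal.toReal_mul,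
        ENNReal.toReal_ofReal (by positivity), finrank_euclideanSpace_fin]
    have hb1 : (∫ v in ball (0:EuclideanSpace ℝ (Fin d)) R, g v) ≤ M * κ * R ^ ((d:ℝ)) := by
      have : (∫ v in ball (0:EuclideanSpace ℝ (Fin d)) R, g v) ≤ ∫ _ in ball (0:EuclideanSpace ℝ (Fin d)) R, M := by
        apply integral_mono_ae i1 (integrableOn_const measure_ball_lt_top.ne)
        exact ae_restrict_of_ae hgM
      rw [setIntegral_const, smul_eq_mul, measureReal_def, hvolball] at this
      rw [← Real.rpow_natCast R d] at this
      calc (∫ v in ball (0:EuclideanSpace ℝ (Fin d)) R, g v) ≤ R ^ ((d:ℝ)) * κ * M := this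
        _ = M * κ * R ^ ((d:ℝ)) := by ring
    -- bound 2
    have hb2 : (∫ v in (ball (0:EuclideanSpace ℝ (Fin d)) R)ᶜ, g v) ≤ e / R ^ 2 := by
      have h1 : (∫ v in (ball (0:EuclideanSpace ℝ (Fin d)) R)ᶜ, g v)
          ≤ ∫ v in (ball (0:EuclideanSpace ℝ (Fin d)) R)ᶜ, (1 / R ^ 2) * (‖v‖ ^ 2 * g v) := by
        apply integral_mono_ae i2 ((hint.const_mul (1 / R ^ 2)).restrict)
        exact (ae_restrict_iff' hcm).mpr (Filter.Eventually.of_forall hptc)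
      have h2 : (∫ v in (ball (0:EuclideanSpace ℝ (Fin d)) R)ᶜ, (1 / R ^ 2) * (‖v‖ ^ 2 * g v))
          ≤ ∫ v, (1 / R ^ 2) * (‖v‖ ^ 2 * g v) := by
        apply setIntegral_le_integral (hint.const_mul (1 / R ^ 2))
        exact Filter.Eventually.of_forall fun v =>
          mul_nonneg (by positivity) (mul_nonneg (by positivity) (hg0 v))
      have h3 : (∫ v, (1 / R ^ 2) * (‖v‖ ^ 2 * g v)) = e / R ^ 2 := by
        rw [integral_const_mul, ← he]; ring
      linarith
    have := rpow_opt d haMκ hepos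
    calc ∫ v, g v ≤ M * κ * R ^ ((d:ℝ)) + e / R ^ 2 := by
          rw [hsplit]; exact add_le_add hb1 hb2
      _ = 2 * (M * κ) ^ ((2:ℝ) / ((d:ℝ)+2)) * e ^ ((d:ℝ) / ((d:ℝ)+2)) := by
          rw [← this, hRdef]

set_option maxHeartbeats 1000000 in
/-- Lemma 3.2, first part: there is `C = C(d) > 0` such that for every essentially bounded
nonnegative measurable `f : ℝ^d × ℝ^d → [0,∞)` with finite kinetic energy, the local density
`ρ_f(x) = ∫ f(x,v) dv` satisfies
`‖ρ_f‖_{L^{(d+2)/d}} ≤ C ‖f‖_{L^∞}^{2/(d+2)} (∬ |v|² f dx dv)^{d/(d+2)}`. -/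
theorem density_Lp_bound (d : ℕ) (hd : 1 ≤ d) :
    ∃ C : ℝ, 0 < C ∧
      ∀ f : EuclideanSpace ℝ (Fin d) × EuclideanSpace ℝ (Fin d) → ℝ,
        Measurable f → (∀ p, 0 ≤ f p) →
        MemLp f ⊤ volume →
        Integrable (fun p => ‖p.2‖ ^ 2 * f p) volume →
        (∫ x : EuclideanSpace ℝ (Fin d),
            (∫ v : EuclideanSpace ℝ (Fin d), f (x, v)) ^ (((d : ℝ) + 2) / (d : ℝ)))
              ^ ((d : ℝ) / ((d : ℝ) + 2)) ≤
          C * (eLpNorm f ⊤ volume).toReal ^ ((2 : ℝ) / ((d : ℝ) + 2)) *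
            (∫ p, ‖p.2‖ ^ 2 * f p) ^ ((d : ℝ) / ((d : ℝ) + 2)) := by
  haveI : Nonempty (Fin d) := ⟨⟨0, hd⟩⟩
  have hd0 : (0:ℝ) < (d:ℝ) := by exact_mod_cast hd
  have hδ : (0:ℝ) < (d:ℝ) + 2 := by positivity
  set κ : ℝ := (volume (ball (0 : EuclideanSpace ℝ (Fin d)) 1)).toReal with hκdef
  have hκ : 0 < κ :=
    ENNReal.toReal_pos (measure_ball_pos volume _ one_pos).ne' measure_ball_lt_top.ne
  refine ⟨2 * κ ^ ((2:ℝ) / ((d:ℝ)+2)), by positivity, ?_⟩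
  intro f hfm hf0 hmem hE
  set M : ℝ := (eLpNorm f ⊤ volume).toReal with hMdef
  have hM0 : (0:ℝ) ≤ M := ENNReal.toReal_nonneg
  -- a.e. bound by M
  have hfM : ∀ᵐ p : EuclideanSpace ℝ (Fin d) × EuclideanSpace ℝ (Fin d) ∂volume, f p ≤ M := by
    have hfin : eLpNormEssSup f volume ≠ ⊤ := by
      rw [← eLpNorm_exponent_top]; exact hmem.2.ne
    filter_upwards [ae_le_eLpNormEssSup (f := f) (μ := volume)] with p hp
    have h2 := ENNReal.toReal_mono hfin hp
    rw [toReal_enorm] at h2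
    rw [hMdef, eLpNorm_exponent_top]
    exact le_trans (le_abs_self _) (by rwa [← Real.norm_eq_abs])
  have hEp : Integrable (fun p : EuclideanSpace ℝ (Fin d) × EuclideanSpace ℝ (Fin d) =>
      ‖p.2‖ ^ 2 * f p) (Measure.prod volume volume) := by
    rwa [← Measure.volume_eq_prod]
  have hfMp : ∀ᵐ p : EuclideanSpace ℝ (Fin d) × EuclideanSpace ℝ (Fin d)
      ∂(Measure.prod volume volume), f p ≤ M := by
    rwa [← Measure.volume_eq_prod]
  have haeInt : ∀ᵐ x ∂(volume : Measure (EuclideanSpace ℝ (Fin d))),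
      Integrable (fun v => ‖v‖ ^ 2 * f (x, v)) volume := hEp.prod_right_ae
  have haeM : ∀ᵐ x ∂(volume : Measure (EuclideanSpace ℝ (Fin d))),
      ∀ᵐ v ∂(volume : Measure (EuclideanSpace ℝ (Fin d))), f (x, v) ≤ M :=
    Measure.ae_ae_of_ae_prod hfMp
  have hEtot0 : (0:ℝ) ≤ ∫ p, ‖p.2‖ ^ 2 * f p :=
    integral_nonneg fun p => mul_nonneg (by positivity) (hf0 p)
  have hfub : (∫ p, ‖p.2‖ ^ 2 * f p) = ∫ x, ∫ v, ‖v‖ ^ 2 * f (x, v) := by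
    rw [Measure.volume_eq_prod, integral_prod _ hEp]
  have heInt : Integrable (fun x => ∫ v, ‖v‖ ^ 2 * f (x, v)) volume :=
    hEp.integral_prod_left
  have hρ0 : ∀ x, (0:ℝ) ≤ ∫ v, f (x, v) := fun x => integral_nonneg fun v => hf0 _
  rcases hM0.eq_or_lt with hMz | hMpos
  · -- M = 0
    have hfz : ∀ᵐ x ∂(volume : Measure (EuclideanSpace ℝ (Fin d))),
        ∀ᵐ v ∂(volume : Measure (EuclideanSpace ℝ (Fin d))), f (x, v) = 0 :=
      Measure.ae_ae_of_ae_prod (hfMp.mono fun p hp => le_antisymm (hMz ▸ hp) (hf0 p))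
    have hρz : ∀ᵐ x ∂(volume : Measure (EuclideanSpace ℝ (Fin d))),
        (∫ v, f (x, v)) ^ (((d:ℝ) + 2) / (d:ℝ)) = 0 := by
      filter_upwards [hfz] with x hx
      have : (fun v => f (x, v)) =ᵐ[volume] 0 := hx.mono fun v hv => hv
      rw [integral_congr_ae this]
      simp only [Pi.zero_apply, integral_zero]
      exact Real.zero_rpow (ne_of_gt (div_pos hδ hd0))
    rw [integral_congr_ae hρz, integral_zero,
      Real.zero_rpow (ne_of_gt (div_pos hd0 hδ)), ← hMz,
      Real.zero_rpow (ne_of_gt (div_pos two_pos hδ))]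
    simp
  · -- M > 0
    have hB0 : (0:ℝ) ≤ 2 * (M * κ) ^ ((2:ℝ) / ((d:ℝ)+2)) := by positivity
    have key : ∀ᵐ x ∂(volume : Measure (EuclideanSpace ℝ (Fin d))),
        (∫ v, f (x, v)) ^ (((d:ℝ) + 2) / (d:ℝ)) ≤
          (2 * (M * κ) ^ ((2:ℝ) / ((d:ℝ)+2))) ^ (((d:ℝ) + 2) / (d:ℝ)) *
            (∫ v, ‖v‖ ^ 2 * f (x, v)) := by
      filter_upwards [haeM, haeInt] with x hx hxint
      have hslice := slice_bound d hd (g := fun v => f (x, v))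
        (hfm.comp measurable_prodMk_left) (fun v => hf0 _) hMpos hx hxint
      have hex0 : (0:ℝ) ≤ ∫ v, ‖v‖ ^ 2 * f (x, v) :=
        integral_nonneg fun v => mul_nonneg (by positivity) (hf0 _)
      have h2 := Real.rpow_le_rpow (hρ0 x) hslice
        (le_of_lt (div_pos hδ hd0))
      refine h2.trans_eq ?_
      rw [Real.mul_rpow hB0 (Real.rpow_nonneg hex0 _), ← Real.rpow_mul hex0]
      congr 1
      have hone : (d:ℝ) / ((d:ℝ)+2) * (((d:ℝ)+2) / (d:ℝ)) = 1 := by field_simp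
      rw [hone, Real.rpow_one]
    have hint2 : (∫ x, (∫ v, f (x, v)) ^ (((d:ℝ) + 2) / (d:ℝ))) ≤
        ∫ x, (2 * (M * κ) ^ ((2:ℝ) / ((d:ℝ)+2))) ^ (((d:ℝ) + 2) / (d:ℝ)) *
          (∫ v, ‖v‖ ^ 2 * f (x, v)) :=
      integral_mono_of_nonneg
        (Filter.Eventually.of_forall fun x => Real.rpow_nonneg (hρ0 x) _)
        (heInt.const_mul _) key
    have hRHSeq : (∫ x, (2 * (M * κ) ^ ((2:ℝ) / ((d:ℝ)+2))) ^ (((d:ℝ) + 2) / (d:ℝ)) *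
          (∫ v, ‖v‖ ^ 2 * f (x, v))) =
        (2 * (M * κ) ^ ((2:ℝ) / ((d:ℝ)+2))) ^ (((d:ℝ) + 2) / (d:ℝ)) *
          ∫ p, ‖p.2‖ ^ 2 * f p := by
      rw [integral_const_mul, ← hfub]
    have hL0 : (0:ℝ) ≤ ∫ x, (∫ v, f (x, v)) ^ (((d:ℝ) + 2) / (d:ℝ)) :=
      integral_nonneg fun x => Real.rpow_nonneg (hρ0 x) _
    have final := Real.rpow_le_rpow hL0 (hint2.trans_eq hRHSeq)
      (le_of_lt (div_pos hd0 hδ))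
    refine final.trans_eq ?_
    rw [Real.mul_rpow (Real.rpow_nonneg hB0 _) hEtot0, ← Real.rpow_mul hB0]
    have hpq : (((d:ℝ) + 2) / (d:ℝ)) * ((d:ℝ) / ((d:ℝ)+2)) = 1 := by field_simp
    rw [hpq, Real.rpow_one, Real.mul_rpow hMpos.le hκ.le]
    ring
end
end

section
/- Let d ≥ 1 be an integer. There is a constant C > 0 depending only on d such that for every measurable function f : ℝ^d × ℝ^d → [0,∞) which is essentially bounded and satisfies ∬_{ℝ^d × ℝ^d} |v|² f(x,v) dx dv < ∞, the function m_f(x) = ∫_{ℝ^d} |v| f(x,v) dv satisfies ( ∫_{ℝ^d} m_f(x)^{(d+2)/(d+1)} dx )^{(d+1)/(d+2)} ≤ C ‖f‖_{L^∞}^{1/(d+2)} ( ∬_{ℝ^d × ℝ^d} |v|² f(x,v) dx dv )^{(d+1)/(d+2)}. In particular the macroscopic momentum ρ_f u_f(x) = ∫_{ℝ^d} v f(x,v) dv, whose Euclidean norm is bounded by m_f(x), satisfies the same L^{(d+2)/(d+1)} bound. -/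
open MeasureTheory Real

noncomputable section

private lemma opt_eq (d : ℕ) {a e : ℝ} (ha : 0 < a) (he : 0 < e) :
    a * (((e / a) ^ ((1:ℝ)/((d:ℝ)+2))) ^ (d+1)) + e / ((e / a) ^ ((1:ℝ)/((d:ℝ)+2)))
      = 2 * (a ^ ((1:ℝ)/((d:ℝ)+2)) * e ^ (((d:ℝ)+1)/((d:ℝ)+2))) := by
  set s : ℝ := (1:ℝ)/((d:ℝ)+2) with hs
  set θ : ℝ := ((d:ℝ)+1)/((d:ℝ)+2) with hθ
  have hd2 : (0:ℝ) < (d:ℝ)+2 := by positivity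
  have hea : 0 < e / a := div_pos he ha
  have h1 : ((e/a)^s)^(d+1:ℕ) = (e/a)^θ := by
    rw [← Real.rpow_natCast ((e/a)^s) (d+1), ← Real.rpow_mul hea.le]
    congr 1
    push_cast
    rw [hs, hθ]
    field_simp
  have h2 : a / a ^ θ = a ^ s := by
    have h := Real.rpow_sub ha 1 θ
    rw [Real.rpow_one] at h
    rw [← h]
    congr 1
    rw [hs, hθ]
    field_simp
    ring
  have h3 : e / e ^ s = e ^ θ := by
    have h := Real.rpow_sub he 1 s
    rw [Real.rpow_one] at h
    rw [← h]
    congr 1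
    rw [hs, hθ]
    field_simp
    ring
  have hterm1 : a * ((e/a)^s)^(d+1:ℕ) = a ^ s * e ^ θ := by
    rw [h1, Real.div_rpow he.le ha.le]
    rw [show a * (e^θ / a^θ) = (a / a^θ) * e^θ by ring, h2]
  have hterm2 : e / (e/a)^s = a ^ s * e ^ θ := by
    rw [Real.div_rpow he.le ha.le, div_div_eq_mul_div]
    rw [show e * a^s / e^s = (e / e^s) * a^s by ring, h3]
    ring
  rw [hterm1, hterm2]
  ring

private lemma euclidean_nontrivial (d : ℕ) (hd : 1 ≤ d) :
    Nontrivial (EuclideanSpace ℝ (Fin d)) := by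
  refine ⟨⟨EuclideanSpace.single ⟨0, hd⟩ (1:ℝ), 0, fun h => ?_⟩⟩
  have := congrArg norm h
  simp [EuclideanSpace.norm_single] at this

private lemma pointwise_bound (d : ℕ) (hd : 1 ≤ d) {L : ℝ} (hL : 0 < L)
    {g : EuclideanSpace ℝ (Fin d) → ℝ} (hg0 : ∀ v, 0 ≤ g v)
    (hgL : ∀ᵐ v, g v ≤ L)
    (hint : Integrable (fun v => ‖v‖ ^ 2 * g v)) :
    (∫ v, ‖v‖ * g v) ≤
      2 * ((L * (volume (Metric.ball (0 : EuclideanSpace ℝ (Fin d)) 1)).toReal)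
            ^ ((1:ℝ)/((d:ℝ)+2))
        * (∫ v, ‖v‖ ^ 2 * g v) ^ (((d:ℝ)+1)/((d:ℝ)+2))) := by
  haveI := euclidean_nontrivial d hd
  let V := EuclideanSpace ℝ (Fin d)
  set κ := (volume (Metric.ball (0 : V) 1)).toReal with hκ
  have hκpos : 0 < κ := ENNReal.toReal_pos
    (Metric.measure_ball_pos volume (0:V) one_pos).ne' measure_ball_lt_top.ne
  set e := ∫ v : V, ‖v‖ ^ 2 * g v with he
  have hnn : ∀ v : V, 0 ≤ ‖v‖ ^ 2 * g v := fun v => mul_nonneg (by positivity) (hg0 v)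
  have he0 : 0 ≤ e := integral_nonneg hnn
  have hθne : (((d:ℝ)+1)/((d:ℝ)+2)) ≠ 0 := by positivity
  rcases he0.eq_or_lt with h0 | hepos
  · -- e = 0
    have hzero : (fun v : V => ‖v‖ ^ 2 * g v) =ᵐ[volume] 0 :=
      (integral_eq_zero_iff_of_nonneg hnn hint).mp h0.symm
    have hne : ∀ᵐ v : V, v ≠ 0 := by
      rw [ae_iff]
      have : {v : V | ¬ v ≠ 0} = {0} := by ext v; simp
      rw [this]
      exact measure_singleton 0
    have hmz : (fun v : V => ‖v‖ * g v) =ᵐ[volume] 0 := by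
      filter_upwards [hzero, hne] with v hv hv0
      have hn : ‖v‖ ≠ 0 := norm_ne_zero_iff.mpr hv0
      have hg : g v = 0 := by
        rcases mul_eq_zero.mp hv with h | h
        · exact absurd h (by positivity)
        · exact h
      simp [hg]
    rw [integral_congr_ae hmz]
    simp only [Pi.zero_apply, integral_zero, ← h0, Real.zero_rpow hθne]
    simp
  · -- e > 0
    set a := L * κ with ha
    have hapos : 0 < a := mul_pos hL hκpos
    set R := (e / a) ^ ((1:ℝ)/((d:ℝ)+2)) with hR
    have hRpos : 0 < R := Real.rpow_pos_of_pos (div_pos hepos hapos) _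
    have hind : Integrable ((Metric.ball (0:V) R).indicator (fun _ => L * R)) volume :=
      (integrableOn_const measure_ball_lt_top.ne).integrable_indicator
        measurableSet_ball
    have hmaj : Integrable (fun v : V =>
        (Metric.ball (0:V) R).indicator (fun _ => L * R) v + R⁻¹ * (‖v‖ ^ 2 * g v)) :=
      hind.add (hint.const_mul R⁻¹)
    have hle : (∫ v : V, ‖v‖ * g v) ≤ ∫ v : V,
        ((Metric.ball (0:V) R).indicator (fun _ => L * R) v + R⁻¹ * (‖v‖ ^ 2 * g v)) := by
      apply integral_mono_of_nonneg
      · exact Filter.Eventually.of_forall fun v => mul_nonneg (norm_nonneg v) (hg0 v)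
      · exact hmaj
      · filter_upwards [hgL] with v hv
        by_cases hvR : v ∈ Metric.ball (0:V) R
        · have hvR' : ‖v‖ ≤ R := le_of_lt (mem_ball_zero_iff.mp hvR)
          have h1 : ‖v‖ * g v ≤ R * L := by
            calc ‖v‖ * g v ≤ R * g v := mul_le_mul_of_nonneg_right hvR' (hg0 v)
            _ ≤ R * L := mul_le_mul_of_nonneg_left hv hRpos.le
          have h2 : 0 ≤ R⁻¹ * (‖v‖ ^ 2 * g v) :=
            mul_nonneg (inv_nonneg.mpr hRpos.le) (hnn v)
          simp only [Set.indicator_of_mem hvR]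
          linarith
        · have hvR' : R ≤ ‖v‖ := le_of_not_gt (fun hc => hvR (mem_ball_zero_iff.mpr hc))
          simp only [Set.indicator_of_notMem hvR, zero_add]
          have h1 : R * (‖v‖ * g v) ≤ ‖v‖ ^ 2 * g v := by nlinarith [mul_nonneg (mul_nonneg (sub_nonneg.mpr hvR') (norm_nonneg v)) (hg0 v)]
          have h2 : ‖v‖ * g v = R⁻¹ * (R * (‖v‖ * g v)) := by
            field_simp
          rw [h2]
          exact mul_le_mul_of_nonneg_left h1 (inv_nonneg.mpr hRpos.le)
    have hcomp : (∫ v : V,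
        ((Metric.ball (0:V) R).indicator (fun _ => L * R) v + R⁻¹ * (‖v‖ ^ 2 * g v)))
        = a * R ^ (d+1) + e / R := by
      rw [integral_add hind (hint.const_mul R⁻¹),
        integral_indicator_const _ measurableSet_ball, integral_const_mul R⁻¹ _]
      have hball : (volume (Metric.ball (0:V) R)).toReal = R ^ d * κ := by
        rw [Measure.addHaar_ball volume (0:V) hRpos.le, finrank_euclideanSpace_fin,
          ENNReal.toReal_mul, ENNReal.toReal_ofReal (by positivity)]
      rw [measureReal_def, hball, smul_eq_mul, inv_mul_eq_div, ← he]
      ring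
    calc (∫ v : V, ‖v‖ * g v) ≤ _ := hle
      _ = a * R ^ (d+1) + e / R := hcomp
      _ = 2 * (a ^ ((1:ℝ)/((d:ℝ)+2)) * e ^ (((d:ℝ)+1)/((d:ℝ)+2))) := opt_eq d hapos hepos

/-- Lemma 3.2, second part: there is `C = C(d) > 0` such that for every essentially bounded
nonnegative measurable `f : ℝ^d × ℝ^d → [0,∞)` with finite kinetic energy, the function
`m_f(x) = ∫ |v| f(x,v) dv` satisfies
`‖m_f‖_{L^{(d+2)/(d+1)}} ≤ C ‖f‖_{L^∞}^{1/(d+2)} (∬ |v|² f dx dv)^{(d+1)/(d+2)}`,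
and in particular the macroscopic momentum `ρ_f u_f(x) = ∫ v f(x,v) dv` satisfies the same
`L^{(d+2)/(d+1)}` bound. -/
theorem momentum_Lp_bound (d : ℕ) (hd : 1 ≤ d) :
    ∃ C : ℝ, 0 < C ∧
      ∀ f : EuclideanSpace ℝ (Fin d) × EuclideanSpace ℝ (Fin d) → ℝ,
        Measurable f → (∀ p, 0 ≤ f p) →
        MemLp f ⊤ volume →
        Integrable (fun p => ‖p.2‖ ^ 2 * f p) volume →
        ((∫ x : EuclideanSpace ℝ (Fin d),
            (∫ v : EuclideanSpace ℝ (Fin d), ‖v‖ * f (x, v)) ^ (((d : ℝ) + 2) / ((d : ℝ) + 1)))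
              ^ (((d : ℝ) + 1) / ((d : ℝ) + 2)) ≤
          C * (eLpNorm f ⊤ volume).toReal ^ ((1 : ℝ) / ((d : ℝ) + 2)) *
            (∫ p, ‖p.2‖ ^ 2 * f p) ^ (((d : ℝ) + 1) / ((d : ℝ) + 2))) ∧
        ((∫ x : EuclideanSpace ℝ (Fin d),
            ‖∫ v : EuclideanSpace ℝ (Fin d), f (x, v) • v‖ ^ (((d : ℝ) + 2) / ((d : ℝ) + 1)))
              ^ (((d : ℝ) + 1) / ((d : ℝ) + 2)) ≤
          C * (eLpNorm f ⊤ volume).toReal ^ ((1 : ℝ) / ((d : ℝ) + 2)) *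
            (∫ p, ‖p.2‖ ^ 2 * f p) ^ (((d : ℝ) + 1) / ((d : ℝ) + 2))) := by
  classical
  set κ := (volume (Metric.ball (0 : EuclideanSpace ℝ (Fin d)) 1)).toReal with hκdef
  have hκpos : 0 < κ :=
    ENNReal.toReal_pos
      (Metric.measure_ball_pos volume (0 : EuclideanSpace ℝ (Fin d)) one_pos).ne'
      measure_ball_lt_top.ne
  set s : ℝ := (1 : ℝ) / ((d : ℝ) + 2) with hsdef
  set θ : ℝ := ((d : ℝ) + 1) / ((d : ℝ) + 2) with hθdef
  set q : ℝ := ((d : ℝ) + 2) / ((d : ℝ) + 1) with hqdef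
  have hd2 : (0:ℝ) < (d:ℝ) + 2 := by positivity
  have hd1 : (0:ℝ) < (d:ℝ) + 1 := by positivity
  have hθpos : 0 < θ := by rw [hθdef]; positivity
  have hqpos : 0 < q := by rw [hqdef]; positivity
  have hspos : 0 < s := by rw [hsdef]; positivity
  have hθq : θ * q = 1 := by rw [hθdef, hqdef]; field_simp
  have hqθ : q * θ = 1 := by rw [hqdef, hθdef]; field_simp
  refine ⟨2 * κ ^ s, mul_pos two_pos (Real.rpow_pos_of_pos hκpos _), ?_⟩
  intro f hfm hf0 hfmem hfint
  set L := (eLpNorm f ⊤ volume).toReal with hLdef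
  have hL0 : 0 ≤ L := ENNReal.toReal_nonneg
  -- a.e. bound f ≤ L
  have hfin : eLpNormEssSup f volume ≠ ⊤ := by
    have h := hfmem.2
    rw [eLpNorm_exponent_top] at h
    exact h.ne
  have hLe : L = (eLpNormEssSup f volume).toReal := by rw [hLdef, eLpNorm_exponent_top]
  have hfL : ∀ᵐ p : EuclideanSpace ℝ (Fin d) × EuclideanSpace ℝ (Fin d), f p ≤ L := by
    filter_upwards [ae_le_eLpNormEssSup (f := f) (μ := volume)] with p hp
    have h1 := ENNReal.toReal_mono hfin hp
    rw [toReal_enorm, Real.norm_eq_abs] at h1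
    rw [hLe]
    exact (le_abs_self _).trans h1
  rw [Measure.volume_eq_prod _ _] at hfL
  have hxL := Measure.ae_ae_of_ae_prod hfL
  -- integrability slices
  have hfint' : Integrable (fun p : EuclideanSpace ℝ (Fin d) × EuclideanSpace ℝ (Fin d) =>
      ‖p.2‖ ^ 2 * f p) (volume.prod volume) := by
    rwa [Measure.volume_eq_prod _ _] at hfint
  have hxint := hfint'.prod_right_ae
  set e : EuclideanSpace ℝ (Fin d) → ℝ :=
    fun x => ∫ v : EuclideanSpace ℝ (Fin d), ‖v‖ ^ 2 * f (x, v) with hedef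
  have he0 : ∀ x, 0 ≤ e x :=
    fun x => integral_nonneg fun v => mul_nonneg (by positivity) (hf0 (x, v))
  have he_int : Integrable e volume := hfint'.integral_prod_left
  have hEe : (∫ x, e x) = ∫ p, ‖p.2‖ ^ 2 * f p := by
    rw [Measure.volume_eq_prod _ _]
    exact (integral_prod _ hfint').symm
  have hE0 : 0 ≤ ∫ p, ‖p.2‖ ^ 2 * f p :=
    integral_nonneg fun p => mul_nonneg (by positivity) (hf0 p)
  -- m
  set m : EuclideanSpace ℝ (Fin d) → ℝ :=
    fun x => ∫ v : EuclideanSpace ℝ (Fin d), ‖v‖ * f (x, v) with hmdef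
  have hm0 : ∀ x, 0 ≤ m x :=
    fun x => integral_nonneg fun v => mul_nonneg (norm_nonneg v) (hf0 (x, v))
  have hm_sm : StronglyMeasurable m :=
    (measurable_snd.norm.mul hfm).stronglyMeasurable.integral_prod_right'
  -- key pointwise a.e. bound
  have hkey : ∀ᵐ x : EuclideanSpace ℝ (Fin d),
      m x ≤ 2 * ((L * κ) ^ s * (e x) ^ θ) := by
    rcases hL0.eq_or_lt with hLz | hLpos
    · -- L = 0 : f = 0 a.e.
      have help0 : eLpNorm f ⊤ volume = 0 := by
        rcases (ENNReal.toReal_eq_zero_iff _).mp hLz.symm with h | h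
        · exact h
        · exact absurd h hfmem.2.ne
      have hf00 : f =ᵐ[volume] 0 := (eLpNorm_eq_zero_iff hfmem.1 (by simp)).mp help0
      rw [Measure.volume_eq_prod _ _] at hf00
      have hx0 := Measure.ae_ae_of_ae_prod hf00
      filter_upwards [hx0] with x hxv
      have hmz : m x = 0 := by
        have hcongr : (fun v : EuclideanSpace ℝ (Fin d) => ‖v‖ * f (x, v))
            =ᵐ[volume] (fun _ => (0:ℝ)) := by
          filter_upwards [hxv] with v hv
          simp only [Pi.zero_apply] at hv
          simp [hv]
        rw [hmdef]
        simp only [integral_congr_ae hcongr, integral_const, smul_zero]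
      rw [hmz]
      exact mul_nonneg (by norm_num)
        (mul_nonneg (Real.rpow_nonneg (mul_nonneg hL0 hκpos.le) _)
          (Real.rpow_nonneg (he0 x) _))
    · filter_upwards [hxL, hxint] with x hx1 hx2
      exact pointwise_bound d hd hLpos (fun v => hf0 (x, v)) hx1 hx2
  -- raise to power q
  set K : ℝ := (2 * (L * κ) ^ s) ^ q with hKdef
  have hA0 : (0:ℝ) ≤ 2 * (L * κ) ^ s :=
    mul_nonneg (by norm_num) (Real.rpow_nonneg (mul_nonneg hL0 hκpos.le) _)
  have hK0 : 0 ≤ K := Real.rpow_nonneg hA0 _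
  have hkey2 : ∀ᵐ x : EuclideanSpace ℝ (Fin d), m x ^ q ≤ K * e x := by
    filter_upwards [hkey] with x hx
    calc m x ^ q ≤ (2 * ((L * κ) ^ s * (e x) ^ θ)) ^ q :=
          Real.rpow_le_rpow (hm0 x) hx hqpos.le
      _ = (2 * (L * κ) ^ s) ^ q * ((e x) ^ θ) ^ q := by
          rw [← mul_assoc, Real.mul_rpow hA0 (Real.rpow_nonneg (he0 x) _)]
      _ = K * e x := by
          rw [hKdef, ← Real.rpow_mul (he0 x), hθq, Real.rpow_one]
  -- integrability of m ^ q
  have hInt : Integrable (fun x => m x ^ q) volume := by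
    refine Integrable.mono' (he_int.const_mul K)
      ((hm_sm.measurable.pow measurable_const).aestronglyMeasurable) ?_
    filter_upwards [hkey2] with x hx
    rwa [Real.norm_eq_abs, abs_of_nonneg (Real.rpow_nonneg (hm0 x) _)]
  have hIle : (∫ x, m x ^ q) ≤ K * ∫ p, ‖p.2‖ ^ 2 * f p := by
    calc (∫ x, m x ^ q) ≤ ∫ x, K * e x :=
          integral_mono_of_nonneg
            (Filter.Eventually.of_forall fun x => Real.rpow_nonneg (hm0 x) _)
            (he_int.const_mul K) hkey2
      _ = K * ∫ x, e x := integral_const_mul K _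
      _ = K * ∫ p, ‖p.2‖ ^ 2 * f p := by rw [hEe]
  have hIq0 : 0 ≤ ∫ x, m x ^ q :=
    integral_nonneg fun x => Real.rpow_nonneg (hm0 x) _
  have hKE : (K * ∫ p, ‖p.2‖ ^ 2 * f p) ^ θ
      = 2 * κ ^ s * L ^ s * (∫ p, ‖p.2‖ ^ 2 * f p) ^ θ := by
    rw [Real.mul_rpow hK0 hE0, hKdef, ← Real.rpow_mul hA0, hqθ, Real.rpow_one,
      Real.mul_rpow hL0 hκpos.le]
    ring
  have hmain : (∫ x, m x ^ q) ^ θ ≤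
      2 * κ ^ s * L ^ s * (∫ p, ‖p.2‖ ^ 2 * f p) ^ θ := by
    rw [← hKE]
    exact Real.rpow_le_rpow hIq0 hIle hθpos.le
  constructor
  · exact hmain
  · -- momentum bound
    have hptle : ∀ x, ‖∫ v : EuclideanSpace ℝ (Fin d), f (x, v) • v‖ ≤ m x := by
      intro x
      calc ‖∫ v : EuclideanSpace ℝ (Fin d), f (x, v) • v‖
          ≤ ∫ v : EuclideanSpace ℝ (Fin d), ‖f (x, v) • v‖ :=
            norm_integral_le_integral_norm _
        _ = m x := by
            rw [hmdef]
            refine integral_congr_ae (Filter.Eventually.of_forall fun v => ?_)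
            show ‖f (x, v) • v‖ = ‖v‖ * f (x, v)
            rw [norm_smul, Real.norm_eq_abs, abs_of_nonneg (hf0 (x, v)), mul_comm]
    have h2le : (∫ x, ‖∫ v : EuclideanSpace ℝ (Fin d), f (x, v) • v‖ ^ q)
        ≤ ∫ x, m x ^ q :=
      integral_mono_of_nonneg
        (Filter.Eventually.of_forall fun x => Real.rpow_nonneg (norm_nonneg _) _)
        hInt
        (Filter.Eventually.of_forall fun x =>
          Real.rpow_le_rpow (norm_nonneg _) (hptle x) hqpos.le)
    have h20 : 0 ≤ ∫ x, ‖∫ v : EuclideanSpace ℝ (Fin d), f (x, v) • v‖ ^ q :=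
      integral_nonneg fun x => Real.rpow_nonneg (norm_nonneg _) _
    exact le_trans (Real.rpow_le_rpow h20 h2le hθpos.le) hmain
end
end

section
/- Let d = 1, γ ∈ (1,3), and 0 < C₀ ≤ C₁, C₂ > 0. There exists a constant C > 0, depending only on γ, C₀, C₁ and C₂, such that for all ρ₁, ρ₂ ∈ [C₀, C₁] and all u₁, u₂ ∈ ℝ with |u₁| ≤ C₂ and |u₂| ≤ C₂, one has ∫_{ℝ} (1 + v²) | M_{ρ₁,u₁}(v) - M_{ρ₂,u₂}(v) | dv ≤ C ( |ρ₁ - ρ₂| + |u₁ - u₂| ), where M_{ρ,u} is the one-dimensional positive-part equilibrium function. -/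
open MeasureTheory Real

noncomputable section

/-- The one-dimensional positive-part equilibrium function
`M_{ρ,u}(v) = c ((2γ/(γ-1)) ρ^{γ-1} - (v-u)²)_+^{n/2}`. -/
def Mpos1 (γ ρ u v : ℝ) : ℝ :=
  cConst 1 γ * (max (2 * γ / (γ - 1) * ρ ^ (γ - 1) - (v - u) ^ 2) 0) ^ (nExp 1 γ / 2)

/-!
Write `M_{ρ,u} = c ((a - (v - u)²)₊)^p` with `a = 2γ/(γ-1) ρ^{γ-1}` and `p = n/2 = 1/(γ-1) - 1/2`,
which is positive exactly because `γ < 3`. For `ρ ≤ C₁` and `|u| ≤ C₂` all these profiles vanish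
for `|v| > C₂ + √a(C₁)`, so the weight `1 + v²` is bounded and only the `L¹` distance matters.
Changing `ρ` at a fixed centre moves the profile monotonically, so the `L¹` distance is the
difference of the masses, and the mass `a^{p+1/2} ∫ ((1 - w²)₊)^p dw` is a constant times `ρ`.
Changing `u` at a fixed `ρ` compares two translates of equal mass that cross at the midpoint of
their centres, so the `L¹` distance is twice the mass gained on one side of it: an integral of the
profile over an interval of length `|u₁ - u₂|`, at most `a^p |u₁ - u₂|`.
-/

open Set

section

variable {α : Type*} [MeasurableSpace α] {μ : Measure α}

/-- Pointwise, `|f - g| = (f - g) + 2 (g - f)⁺`, and `s` is where `(g - f)⁺` lives. -/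
theorem integral_abs_sub_eq_two_mul_setIntegral {f g : α → ℝ} {s : Set α}
    (hf : Integrable f μ) (hg : Integrable g μ) (hs : MeasurableSet s)
    (hfg : ∫ x, f x ∂μ = ∫ x, g x ∂μ) (h_in : ∀ x ∈ s, f x ≤ g x)
    (h_out : ∀ x ∉ s, g x ≤ f x) :
    ∫ x, |f x - g x| ∂μ = 2 * ∫ x in s, (g x - f x) ∂μ := by
  have hpt : ∀ x, |f x - g x| = (f x - g x) + 2 * s.indicator (fun x => g x - f x) x := by
    intro x
    by_cases hx : x ∈ s
    · rw [indicator_of_mem hx, abs_sub_comm, abs_of_nonneg (sub_nonneg.2 (h_in x hx))]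
      ring
    · rw [indicator_of_notMem hx, abs_of_nonneg (sub_nonneg.2 (h_out x hx))]
      ring
  simp_rw [hpt]
  have hsub : Integrable (fun x => f x - g x) μ := hf.sub hg
  have hind : Integrable (fun x => 2 * s.indicator (fun x => g x - f x) x) μ :=
    ((hg.sub hf).indicator hs).const_mul 2
  rw [integral_add hsub hind, integral_sub hf hg, hfg, integral_const_mul, integral_indicator hs,
    sub_self, zero_add]

end

theorem setIntegral_Ioi_comp_sub_right (f : ℝ → ℝ) (m b : ℝ) :
    ∫ v in Ioi m, f (v - b) = ∫ v in Ioi (m - b), f v := by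
  have h := (measurePreserving_sub_right volume b).setIntegral_preimage_emb
    (measurableEmbedding_subRight b) f (Ioi (m - b))
  rwa [preimage_sub_const_Ioi, sub_add_cancel] at h

theorem setIntegral_Ioi_comp_sub_sub_comp_sub_le {f : ℝ → ℝ} {M : ℝ} (hf : Integrable f)
    (hM : ∀ x, f x ≤ M) (m : ℝ) {b₁ b₂ : ℝ} (hb : b₁ ≤ b₂) :
    ∫ v in Ioi m, (f (v - b₂) - f (v - b₁)) ≤ M * (b₂ - b₁) := by
  have hf' : Integrable fun v => f (v - b₁) := hf.comp_sub_right b₁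
  have hf'' : Integrable fun v => f (v - b₂) := hf.comp_sub_right b₂
  calc ∫ v in Ioi m, (f (v - b₂) - f (v - b₁))
      = (∫ v in Ioi (m - b₂), f v) - ∫ v in Ioi (m - b₁), f v := by
        rw [integral_sub hf''.integrableOn hf'.integrableOn, setIntegral_Ioi_comp_sub_right,
          setIntegral_Ioi_comp_sub_right]
    _ = ∫ v in (m - b₂)..(m - b₁), f v :=
        intervalIntegral.integral_Ioi_sub_Ioi hf.integrableOn (by linarith)
    _ ≤ ∫ _ in (m - b₂)..(m - b₁), M :=
        intervalIntegral.integral_mono_on (by linarith) hf.intervalIntegrable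
          intervalIntegrable_const fun v _ => hM v
    _ = M * (b₂ - b₁) := by
        rw [intervalIntegral.integral_const, smul_eq_mul]; ring

theorem integral_one_add_sq_mul_le {f : ℝ → ℝ} (hf : Integrable f) (hf₀ : ∀ v, 0 ≤ f v)
    {R : ℝ} (hR : ∀ v, R < |v| → f v = 0) :
    ∫ v, (1 + v ^ 2) * f v ≤ (1 + R ^ 2) * ∫ v, f v := by
  rw [← integral_const_mul]
  refine integral_mono_of_nonneg (.of_forall fun v => mul_nonneg (by positivity) (hf₀ v))
    (hf.const_mul _) (.of_forall fun v => ?_)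
  by_cases hv : R < |v|
  · simp [hR v hv]
  · have : v ^ 2 ≤ R ^ 2 := by
      rw [← sq_abs]; exact pow_le_pow_left₀ (abs_nonneg v) (not_lt.1 hv) 2
    exact mul_le_mul_of_nonneg_right (by linarith) (hf₀ v)

def parabolaPow (p a b v : ℝ) : ℝ := (max (a - (v - b) ^ 2) 0) ^ p

namespace parabolaPow

theorem nonneg (p a b v : ℝ) : 0 ≤ parabolaPow p a b v :=
  Real.rpow_nonneg (le_max_right _ _) p

theorem le_rpow {p a : ℝ} (hp : 0 ≤ p) (ha : 0 ≤ a) (b v : ℝ) : parabolaPow p a b v ≤ a ^ p :=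
  Real.rpow_le_rpow (le_max_right _ _) (max_le (by nlinarith [sq_nonneg (v - b)]) ha) hp

theorem mono {p a a' b b' v v' : ℝ} (hp : 0 ≤ p) (h : a - (v - b) ^ 2 ≤ a' - (v' - b') ^ 2) :
    parabolaPow p a b v ≤ parabolaPow p a' b' v' :=
  Real.rpow_le_rpow (le_max_right _ _) (max_le_max h le_rfl) hp

theorem eq_zero_of_sqrt_lt {p a b v : ℝ} (hp : p ≠ 0) (hv : √a < |v - b|) :
    parabolaPow p a b v = 0 := by
  have : a - (v - b) ^ 2 ≤ 0 := by
    have := Real.lt_sq_of_sqrt_lt hv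
    rw [sq_abs] at this
    linarith
  rw [parabolaPow, max_eq_right this, Real.zero_rpow hp]

theorem eq_zero_of_lt_abs {p a β b v B : ℝ} (hp : p ≠ 0) (ha : a ≤ β) (hb : |b| ≤ B)
    (hv : B + √β < |v|) : parabolaPow p a b v = 0 :=
  eq_zero_of_sqrt_lt hp <| calc
    √a ≤ √β := Real.sqrt_le_sqrt ha
    _ < |v| - |b| := by linarith
    _ ≤ |v - b| := abs_sub_abs_le_abs_sub v b

theorem continuous {p : ℝ} (hp : 0 ≤ p) (a b : ℝ) : Continuous (parabolaPow p a b) :=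
  (by fun_prop : Continuous fun v => max (a - (v - b) ^ 2) 0).rpow_const fun _ => Or.inr hp

theorem hasCompactSupport {p : ℝ} (hp : p ≠ 0) (a b : ℝ) :
    HasCompactSupport (parabolaPow p a b) := by
  refine HasCompactSupport.intro (isCompact_Icc (a := b - √a) (b := b + √a)) fun v hv => ?_
  refine eq_zero_of_sqrt_lt hp ?_
  rw [mem_Icc, not_and_or, not_le, not_le] at hv
  rcases hv with hv | hv
  · rw [abs_of_neg (by linarith [Real.sqrt_nonneg a])]; linarith
  · rw [abs_of_pos (by linarith [Real.sqrt_nonneg a])]; linarith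

theorem integrable {p : ℝ} (hp : 0 < p) (a b : ℝ) : Integrable (parabolaPow p a b) :=
  (continuous hp.le a b).integrable_of_hasCompactSupport (hasCompactSupport hp.ne' a b)

theorem comp_sub (p a b v : ℝ) : parabolaPow p a 0 (v - b) = parabolaPow p a b v := by
  simp [parabolaPow]

theorem integral_eq_integral_zero (p a b : ℝ) :
    ∫ v, parabolaPow p a b v = ∫ v, parabolaPow p a 0 v := by
  simp_rw [← comp_sub p a b]
  exact integral_sub_right_eq_self _ b

theorem sqrt_mul {p a : ℝ} (ha : 0 ≤ a) (w : ℝ) :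
    parabolaPow p a 0 (√a * w) = a ^ p * parabolaPow p 1 0 w := by
  have : a - (√a * w - 0) ^ 2 = a * (1 - (w - 0) ^ 2) := by
    rw [sub_zero, sub_zero, mul_pow, Real.sq_sqrt ha]; ring
  rw [parabolaPow, parabolaPow, this, ← mul_zero a, ← mul_max_of_nonneg _ _ ha, mul_zero,
    Real.mul_rpow ha (le_max_right _ _)]

theorem integral_eq {p a : ℝ} (ha : 0 < a) (b : ℝ) :
    ∫ v, parabolaPow p a b v = a ^ (p + 1 / 2) * ∫ w, parabolaPow p 1 0 w := by
  have hscale := Measure.integral_comp_mul_left (parabolaPow p a 0) √a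
  simp_rw [sqrt_mul ha.le, integral_const_mul, smul_eq_mul,
    abs_of_pos (inv_pos.2 (Real.sqrt_pos.2 ha))] at hscale
  rw [integral_eq_integral_zero, Real.rpow_add ha, ← Real.sqrt_eq_rpow, mul_comm (a ^ p),
    mul_assoc, hscale, mul_inv_cancel_left₀ (Real.sqrt_pos.2 ha).ne']

theorem integral_abs_sub_sameCenter {p a₁ a₂ : ℝ} (hp : 0 < p) (ha₁ : 0 < a₁) (ha₂ : 0 < a₂)
    (b : ℝ) :
    ∫ v, |parabolaPow p a₁ b v - parabolaPow p a₂ b v| =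
      |a₁ ^ (p + 1 / 2) - a₂ ^ (p + 1 / 2)| * ∫ w, parabolaPow p 1 0 w := by
  wlog h : a₁ ≤ a₂ generalizing a₁ a₂
  · simp_rw [abs_sub_comm (parabolaPow p a₁ b _), abs_sub_comm (a₁ ^ (p + 1 / 2))]
    exact this ha₂ ha₁ (le_of_not_ge h)
  have habs : ∀ v, |parabolaPow p a₁ b v - parabolaPow p a₂ b v| =
      parabolaPow p a₂ b v - parabolaPow p a₁ b v := fun v => by
    rw [abs_sub_comm, abs_of_nonneg (sub_nonneg.2 (mono hp.le (by linarith)))]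
  have hq : a₁ ^ (p + 1 / 2) ≤ a₂ ^ (p + 1 / 2) := Real.rpow_le_rpow ha₁.le h (by linarith)
  simp_rw [habs]
  rw [integral_sub (integrable hp a₂ b) (integrable hp a₁ b), integral_eq ha₂, integral_eq ha₁,
    abs_sub_comm, abs_of_nonneg (sub_nonneg.2 hq), sub_mul]

/-- Split at the midpoint of the two centres: right of it the profile centred further right
dominates, left of it the other one. -/
theorem integral_abs_sub_sameRadius_le {p a : ℝ} (hp : 0 < p) (ha : 0 ≤ a) (b₁ b₂ : ℝ) :
    ∫ v, |parabolaPow p a b₁ v - parabolaPow p a b₂ v| ≤ 2 * a ^ p * |b₁ - b₂| := by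
  wlog hb : b₁ ≤ b₂ generalizing b₁ b₂
  · simp_rw [abs_sub_comm (parabolaPow p a b₁ _), abs_sub_comm b₁]
    exact this b₂ b₁ (le_of_not_ge hb)
  rw [integral_abs_sub_eq_two_mul_setIntegral (integrable hp a b₁) (integrable hp a b₂)
    (measurableSet_Ioi (a := (b₁ + b₂) / 2))
    (by rw [integral_eq_integral_zero, integral_eq_integral_zero p a b₂])
    (fun v hv => mono hp.le (by rw [mem_Ioi] at hv; nlinarith))
    (fun v hv => mono hp.le (by rw [mem_Ioi, not_lt] at hv; nlinarith)),
    abs_sub_comm, abs_of_nonneg (sub_nonneg.2 hb)]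
  have := setIntegral_Ioi_comp_sub_sub_comp_sub_le (integrable hp a 0) (le_rpow hp.le ha 0)
    ((b₁ + b₂) / 2) hb
  simp only [comp_sub] at this
  linarith

theorem integral_abs_sub_le {p a₁ a₂ : ℝ} (hp : 0 < p) (ha₁ : 0 < a₁) (ha₂ : 0 < a₂)
    (b₁ b₂ : ℝ) :
    ∫ v, |parabolaPow p a₁ b₁ v - parabolaPow p a₂ b₂ v| ≤
      |a₁ ^ (p + 1 / 2) - a₂ ^ (p + 1 / 2)| * (∫ w, parabolaPow p 1 0 w) +
        2 * a₂ ^ p * |b₁ - b₂| := by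
  have hi := integrable hp
  have h₁ : Integrable fun v => |parabolaPow p a₁ b₁ v - parabolaPow p a₂ b₁ v| :=
    ((hi a₁ b₁).sub (hi a₂ b₁)).abs
  have h₂ : Integrable fun v => |parabolaPow p a₂ b₁ v - parabolaPow p a₂ b₂ v| :=
    ((hi a₂ b₁).sub (hi a₂ b₂)).abs
  calc ∫ v, |parabolaPow p a₁ b₁ v - parabolaPow p a₂ b₂ v|
      ≤ ∫ v, (|parabolaPow p a₁ b₁ v - parabolaPow p a₂ b₁ v| +
          |parabolaPow p a₂ b₁ v - parabolaPow p a₂ b₂ v|) :=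
        integral_mono ((hi a₁ b₁).sub (hi a₂ b₂)).abs (h₁.add h₂) fun v => abs_sub_le _ _ _
    _ ≤ _ := by
        rw [integral_add h₁ h₂, integral_abs_sub_sameCenter hp ha₁ ha₂]
        gcongr
        exact integral_abs_sub_sameRadius_le hp ha₂.le b₁ b₂

end parabolaPow

theorem nExp_one_div_two (γ : ℝ) : nExp 1 γ / 2 = (γ - 1)⁻¹ - 1 / 2 := by
  rw [nExp, Nat.cast_one]; ring

theorem nExp_one_div_two_pos {γ : ℝ} (hγ : 1 < γ) (hγ' : γ < 3) : 0 < nExp 1 γ / 2 := by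
  rw [nExp_one_div_two, sub_pos, ← one_div]
  exact one_div_lt_one_div_of_lt (by linarith) (by linarith)

namespace Mpos1

def radiusSq (γ ρ : ℝ) : ℝ := 2 * γ / (γ - 1) * ρ ^ (γ - 1)

theorem eq_parabolaPow (γ ρ u v : ℝ) :
    Mpos1 γ ρ u v = cConst 1 γ * parabolaPow (nExp 1 γ / 2) (radiusSq γ ρ) u v :=
  rfl

variable {γ : ℝ}

theorem radiusSq_pos (hγ : 1 < γ) {ρ : ℝ} (hρ : 0 < ρ) : 0 < radiusSq γ ρ :=
  mul_pos (div_pos (by linarith) (by linarith)) (Real.rpow_pos_of_pos hρ _)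

theorem radiusSq_mono (hγ : 1 < γ) {ρ ρ' : ℝ} (hρ : 0 ≤ ρ) (h : ρ ≤ ρ') :
    radiusSq γ ρ ≤ radiusSq γ ρ' :=
  mul_le_mul_of_nonneg_left (Real.rpow_le_rpow hρ h (by linarith))
    (div_nonneg (by linarith) (by linarith))

theorem radiusSq_rpow (hγ : 1 < γ) {ρ : ℝ} (hρ : 0 ≤ ρ) :
    radiusSq γ ρ ^ (nExp 1 γ / 2 + 1 / 2) = (2 * γ / (γ - 1)) ^ (γ - 1)⁻¹ * ρ := by
  rw [radiusSq, nExp_one_div_two, sub_add_cancel,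
    Real.mul_rpow (div_nonneg (by linarith) (by linarith)) (Real.rpow_nonneg hρ _),
    Real.rpow_rpow_inv hρ (by linarith)]

theorem integrable (hγ : 1 < γ) (hγ' : γ < 3) (ρ u : ℝ) : Integrable (Mpos1 γ ρ u) :=
  (parabolaPow.integrable (nExp_one_div_two_pos hγ hγ') _ u).const_mul _

theorem eq_zero_of_lt_abs (hγ : 1 < γ) (hγ' : γ < 3) {ρ ρ' u v B : ℝ} (hρ : 0 ≤ ρ) (h : ρ ≤ ρ')
    (hu : |u| ≤ B)     (hv : B + √(radiusSq γ ρ') < |v|) : Mpos1 γ ρ u v = 0 := by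
  rw [eq_parabolaPow, parabolaPow.eq_zero_of_lt_abs (nExp_one_div_two_pos hγ hγ').ne'
    (radiusSq_mono hγ hρ h) hu hv, mul_zero]

theorem integral_abs_sub_le (hγ : 1 < γ) (hγ' : γ < 3) {ρ₁ ρ₂ ρ' : ℝ} (hρ₁ : 0 < ρ₁)
    (hρ₂ : 0 < ρ₂) (h : ρ₂ ≤ ρ') (u₁ u₂ : ℝ) :
    ∫ v, |Mpos1 γ ρ₁ u₁ v - Mpos1 γ ρ₂ u₂ v| ≤
      |cConst 1 γ| * ((2 * γ / (γ - 1)) ^ (γ - 1)⁻¹ * (∫ w, parabolaPow (nExp 1 γ / 2) 1 0 w) *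
        |ρ₁ - ρ₂| + 2 * radiusSq γ ρ' ^ (nExp 1 γ / 2) * |u₁ - u₂|) := by
  have hp := nExp_one_div_two_pos hγ hγ'
  simp_rw [eq_parabolaPow, ← mul_sub, abs_mul, integral_const_mul]
  gcongr
  refine (parabolaPow.integral_abs_sub_le hp (radiusSq_pos hγ hρ₁) (radiusSq_pos hγ hρ₂)
    u₁ u₂).trans ?_
  rw [radiusSq_rpow hγ hρ₁.le, radiusSq_rpow hγ hρ₂.le, ← mul_sub, abs_mul,
    abs_of_pos (Real.rpow_pos_of_pos (div_pos (by linarith) (by linarith)) _),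
    mul_right_comm (_ ^ _)]
  gcongr
  exacts [(radiusSq_pos hγ hρ₂).le, radiusSq_mono hγ hρ₂.le h]

end Mpos1

theorem lipschitz_Mpos1_general (γ : ℝ) (hγ : 1 < γ) (hγ' : γ < 3)
    (C₀ C₁ C₂ : ℝ) (hC₀ : 0 < C₀) (hC₀₁ : C₀ ≤ C₁) :
    ∃ C : ℝ, 0 < C ∧
      ∀ ρ₁ ρ₂ : ℝ, ρ₁ ∈ Set.Icc C₀ C₁ → ρ₂ ∈ Set.Icc C₀ C₁ →
      ∀ u₁ u₂ : ℝ, |u₁| ≤ C₂ → |u₂| ≤ C₂ →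
        (∫ v : ℝ, (1 + v ^ 2) * |Mpos1 γ ρ₁ u₁ v - Mpos1 γ ρ₂ u₂ v|) ≤
          C * (|ρ₁ - ρ₂| + |u₁ - u₂|) := by
  set R := C₂ + √(Mpos1.radiusSq γ C₁)
  set A := (2 * γ / (γ - 1)) ^ (γ - 1)⁻¹ * ∫ w, parabolaPow (nExp 1 γ / 2) 1 0 w
  set B := 2 * Mpos1.radiusSq γ C₁ ^ (nExp 1 γ / 2)
  have hA : 0 ≤ A := mul_nonneg (Real.rpow_nonneg (div_nonneg (by linarith) (by linarith)) _)
    (integral_nonneg (parabolaPow.nonneg _ 1 0))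
  have hB : 0 ≤ B := by
    have := Mpos1.radiusSq_pos hγ (hC₀.trans_le hC₀₁); positivity
  set L := (1 + R ^ 2) * |cConst 1 γ| * (A + B)
  have hL : 0 ≤ L := by positivity
  refine ⟨L + 1, by linarith, fun ρ₁ ρ₂ hρ₁ hρ₂ u₁ u₂ hu₁ hu₂ => ?_⟩
  have hρ₁₀ : 0 < ρ₁ := hC₀.trans_le hρ₁.1
  have hρ₂₀ : 0 < ρ₂ := hC₀.trans_le hρ₂.1
  have hvanish : ∀ v, R < |v| → |Mpos1 γ ρ₁ u₁ v - Mpos1 γ ρ₂ u₂ v| = 0 := fun v hv => by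
    rw [Mpos1.eq_zero_of_lt_abs hγ hγ' hρ₁₀.le hρ₁.2 hu₁ hv,
      Mpos1.eq_zero_of_lt_abs hγ hγ' hρ₂₀.le hρ₂.2 hu₂ hv, sub_zero, abs_zero]
  calc ∫ v, (1 + v ^ 2) * |Mpos1 γ ρ₁ u₁ v - Mpos1 γ ρ₂ u₂ v|
      ≤ (1 + R ^ 2) * ∫ v, |Mpos1 γ ρ₁ u₁ v - Mpos1 γ ρ₂ u₂ v| :=
        integral_one_add_sq_mul_le ((Mpos1.integrable hγ hγ' ρ₁ u₁).sub
          (Mpos1.integrable hγ hγ' ρ₂ u₂)).abs (fun v => abs_nonneg _) hvanish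
    _ ≤ (1 + R ^ 2) * (|cConst 1 γ| * (A * |ρ₁ - ρ₂| + B * |u₁ - u₂|)) := by
        gcongr
        exact Mpos1.integral_abs_sub_le hγ hγ' hρ₁₀ hρ₂₀ hρ₂.2 u₁ u₂
    _ ≤ (L + 1) * (|ρ₁ - ρ₂| + |u₁ - u₂|) := by
        have hP : 0 ≤ (1 + R ^ 2) * |cConst 1 γ| := by positivity
        nlinarith [mul_nonneg (mul_nonneg hP hA) (abs_nonneg (u₁ - u₂)),
          mul_nonneg (mul_nonneg hP hB) (abs_nonneg (ρ₁ - ρ₂)), abs_nonneg (u₁ - u₂),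
          abs_nonneg (ρ₁ - ρ₂)]

/-- Lipschitz estimate in `L¹_2(ℝ)` for the one-dimensional positive-part equilibrium
function, `1 < γ < 3`: for densities in `[C₀, C₁]` and velocities bounded by `C₂`,
`∫ (1+v²) |M_{ρ₁,u₁} - M_{ρ₂,u₂}| dv ≤ C (|ρ₁-ρ₂| + |u₁-u₂|)`. -/
theorem lipschitz_Mpos1 (γ : ℝ) (hγ : 1 < γ) (hγ' : γ < 3)
    (C₀ C₁ C₂ : ℝ) (hC₀ : 0 < C₀) (hC₀₁ : C₀ ≤ C₁) (hC₂ : 0 < C₂) :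
    ∃ C : ℝ, 0 < C ∧
      ∀ ρ₁ ρ₂ : ℝ, ρ₁ ∈ Set.Icc C₀ C₁ → ρ₂ ∈ Set.Icc C₀ C₁ →
      ∀ u₁ u₂ : ℝ, |u₁| ≤ C₂ → |u₂| ≤ C₂ →
        (∫ v : ℝ, (1 + v ^ 2) * |Mpos1 γ ρ₁ u₁ v - Mpos1 γ ρ₂ u₂ v|) ≤
          C * (|ρ₁ - ρ₂| + |u₁ - u₂|) :=
  lipschitz_Mpos1_general γ hγ hγ' C₀ C₁ C₂ hC₀ hC₀₁
end
end

section
/- Let d ≥ 2 be an integer, γ ∈ (1, (d+4)/(d+2)], and 0 < C₀ ≤ C₁, C₂ > 0. There exists a constant C > 0, depending only on d, γ, C₀, C₁ and C₂, such that for all ρ₁, ρ₂ ∈ [C₀, C₁] and all u₁, u₂ ∈ ℝ^d with |u₁| ≤ C₂ and |u₂| ≤ C₂, one has ∫_{ℝ^d} (1 + |v|²) | M_{ρ₁,u₁}(v) - M_{ρ₂,u₂}(v) | dv ≤ C ( |ρ₁ - ρ₂| + |u₁ - u₂| ), where M_{ρ,u} is the positive-part equilibrium function. -/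
open MeasureTheory Real

set_option maxHeartbeats 2000000

noncomputable section

/-- Mean value inequality for `t ↦ t ^ p` (real power) on a convex set. -/
lemma my_abs_rpow_sub_rpow_le {p L : ℝ} {s : Set ℝ} (hs : Convex ℝ s) (hp0 : 0 ≤ p)
    (hder : ∀ t ∈ s, t ≠ 0 ∨ 1 ≤ p) (hpos : ∀ t ∈ s, (0:ℝ) ≤ t)
    (hbound : ∀ t ∈ s, p * t ^ (p - 1) ≤ L)
    {x y : ℝ} (hx : x ∈ s) (hy : y ∈ s) :
    |x ^ p - y ^ p| ≤ L * |x - y| := by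
  have h := hs.norm_image_sub_le_of_norm_hasDerivWithin_le
    (f := fun t : ℝ => t ^ p) (f' := fun t : ℝ => p * t ^ (p - 1))
    (fun t ht => (Real.hasDerivAt_rpow_const (hder t ht)).hasDerivWithinAt)
    (fun t ht => by
      rw [Real.norm_eq_abs, abs_of_nonneg (mul_nonneg hp0 (Real.rpow_nonneg (hpos t ht) _))]
      exact hbound t ht) hy hx
  simpa [Real.norm_eq_abs] using h

/-- Lipschitz bound for `t ↦ (max t 0) ^ p`, `p ≥ 1`, on `(-∞, R]`. -/
lemma my_abs_maxrpow_sub_le {p R x y : ℝ} (hp : 1 ≤ p) (hR : 0 ≤ R)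
    (hx : x ≤ R) (hy : y ≤ R) :
    |max x 0 ^ p - max y 0 ^ p| ≤ p * R ^ (p - 1) * |x - y| := by
  have hL : 0 ≤ p * R ^ (p - 1) := mul_nonneg (by linarith) (Real.rpow_nonneg hR _)
  have h := my_abs_rpow_sub_rpow_le (s := Set.Icc 0 R) (convex_Icc _ _) (by linarith)
    (fun t _ => Or.inr hp) (fun t ht => ht.1)
    (fun t ht => mul_le_mul_of_nonneg_left
      (Real.rpow_le_rpow ht.1 ht.2 (by linarith)) (by linarith))
    (x := max x 0) (y := max y 0)
    ⟨le_max_right _ _, max_le hx hR⟩ ⟨le_max_right _ _, max_le hy hR⟩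
  refine h.trans (mul_le_mul_of_nonneg_left ?_ hL)
  exact abs_max_sub_max_le_abs x y 0

/-- Lipschitz estimate in `L¹_2(ℝ^d)` for the positive-part equilibrium function,
`d ≥ 2` and `1 < γ ≤ (d+4)/(d+2)`: for densities in `[C₀, C₁]` and bulk velocities bounded
by `C₂`, `∫ (1+|v|²) |M_{ρ₁,u₁} - M_{ρ₂,u₂}| dv ≤ C (|ρ₁-ρ₂| + |u₁-u₂|)`. -/
theorem lipschitz_Mpos (d : ℕ) (hd : 2 ≤ d) (γ : ℝ) (hγ : 1 < γ)
    (hγ' : γ ≤ ((d : ℝ) + 4) / ((d : ℝ) + 2))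
    (C₀ C₁ C₂ : ℝ) (hC₀ : 0 < C₀) (hC₀₁ : C₀ ≤ C₁) (hC₂ : 0 < C₂) :
    ∃ C : ℝ, 0 < C ∧
      ∀ ρ₁ ρ₂ : ℝ, ρ₁ ∈ Set.Icc C₀ C₁ → ρ₂ ∈ Set.Icc C₀ C₁ →
      ∀ u₁ u₂ : EuclideanSpace ℝ (Fin d), ‖u₁‖ ≤ C₂ → ‖u₂‖ ≤ C₂ →
        (∫ v : EuclideanSpace ℝ (Fin d),
            (1 + ‖v‖ ^ 2) * |Mpos d γ ρ₁ u₁ v - Mpos d γ ρ₂ u₂ v|) ≤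
          C * (|ρ₁ - ρ₂| + ‖u₁ - u₂‖) := by
  have hq : 0 < γ - 1 := by linarith
  have hd2 : (0:ℝ) < (d:ℝ) + 2 := by positivity
  have hdR : (2:ℝ) ≤ (d:ℝ) := by exact_mod_cast hd
  have h1 : γ * ((d:ℝ) + 2) ≤ (d:ℝ) + 4 := (le_div_iff₀ hd2).mp hγ'
  have h2 : ((d:ℝ) + 2) * (γ - 1) ≤ 2 := by nlinarith
  have h3 : ((d:ℝ) + 2) ≤ 2 / (γ - 1) := (le_div_iff₀ hq).mpr h2
  have hn2 : 2 ≤ nExp d γ := by unfold nExp; linarith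
  set p : ℝ := nExp d γ / 2 with hp_def
  have hp1 : 1 ≤ p := by rw [hp_def]; linarith
  have hγ2 : γ - 2 ≤ 0 := by nlinarith
  set A : ℝ := 2 * γ / (γ - 1) with hA_def
  have hA : 0 < A := div_pos (by linarith) hq
  set Rb : ℝ := A * C₁ ^ (γ - 1) with hRb_def
  have hC₁ : 0 < C₁ := lt_of_lt_of_le hC₀ hC₀₁
  have hRb : 0 < Rb := mul_pos hA (Real.rpow_pos_of_pos hC₁ _)
  set R₀ : ℝ := C₂ + Real.sqrt Rb with hR₀_def
  have hR₀ : 0 < R₀ := by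
    have := Real.sqrt_nonneg Rb; rw [hR₀_def]; linarith
  set K₁ : ℝ := A * ((γ - 1) * C₀ ^ (γ - 1 - 1)) with hK₁_def
  have hK₁ : 0 ≤ K₁ :=
    mul_nonneg hA.le (mul_nonneg hq.le (Real.rpow_nonneg hC₀.le _))
  set K₂ : ℝ := 2 * (R₀ + C₂) with hK₂_def
  have hK₂ : 0 ≤ K₂ := by rw [hK₂_def]; linarith
  set Lp : ℝ := p * Rb ^ (p - 1) with hLp_def
  have hLp : 0 ≤ Lp := mul_nonneg (by linarith) (Real.rpow_nonneg hRb.le _)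
  set c' : ℝ := (1 + R₀ ^ 2) * (|cConst d γ| * (Lp * (K₁ + K₂))) with hc'_def
  have hc' : 0 ≤ c' := by
    refine mul_nonneg (by nlinarith) (mul_nonneg (abs_nonneg _) (mul_nonneg hLp ?_))
    linarith
  set volB : ℝ :=
    (volume (Metric.closedBall (0 : EuclideanSpace ℝ (Fin d)) R₀)).toReal with hvol_def
  have hvolB : 0 ≤ volB := ENNReal.toReal_nonneg
  refine ⟨volB * c' + 1, by positivity, ?_⟩
  intro ρ₁ ρ₂ hρ₁ hρ₂ u₁ u₂ hu₁ hu₂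
  set Δ : ℝ := |ρ₁ - ρ₂| + ‖u₁ - u₂‖ with hΔ_def
  have hΔ : 0 ≤ Δ := add_nonneg (abs_nonneg _) (norm_nonneg _)
  -- pointwise bound by an indicator function
  have hpoint : ∀ v : EuclideanSpace ℝ (Fin d),
      (1 + ‖v‖ ^ 2) * |Mpos d γ ρ₁ u₁ v - Mpos d γ ρ₂ u₂ v| ≤
      Set.indicator (Metric.closedBall (0 : EuclideanSpace ℝ (Fin d)) R₀)
        (fun _ => c' * Δ) v := by
    intro v
    by_cases hv : v ∈ Metric.closedBall (0 : EuclideanSpace ℝ (Fin d)) R₀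
    · rw [Set.indicator_of_mem hv]
      rw [Metric.mem_closedBall, dist_zero_right] at hv
      -- arguments of the positive part
      have hargle : ∀ ρ ∈ Set.Icc C₀ C₁, ∀ u : EuclideanSpace ℝ (Fin d),
          A * ρ ^ (γ - 1) - ‖v - u‖ ^ 2 ≤ Rb := by
        intro ρ hρ u
        have h : ρ ^ (γ - 1) ≤ C₁ ^ (γ - 1) :=
          Real.rpow_le_rpow (le_trans hC₀.le hρ.1) hρ.2 hq.le
        have h2 : A * ρ ^ (γ - 1) ≤ Rb := by
          rw [hRb_def]; exact mul_le_mul_of_nonneg_left h hA.le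
        nlinarith [sq_nonneg ‖v - u‖]
      have hMdiff : |Mpos d γ ρ₁ u₁ v - Mpos d γ ρ₂ u₂ v| ≤
          |cConst d γ| * (Lp * ((K₁ + K₂) * Δ)) := by
        have hrw : Mpos d γ ρ₁ u₁ v - Mpos d γ ρ₂ u₂ v =
            cConst d γ * ((max (A * ρ₁ ^ (γ - 1) - ‖v - u₁‖ ^ 2) 0) ^ p -
              (max (A * ρ₂ ^ (γ - 1) - ‖v - u₂‖ ^ 2) 0) ^ p) := by
          unfold Mpos; rw [← hA_def, ← hp_def]; ring
        rw [hrw, abs_mul]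
        refine mul_le_mul_of_nonneg_left ?_ (abs_nonneg _)
        have hmax := my_abs_maxrpow_sub_le hp1 hRb.le
          (hargle ρ₁ hρ₁ u₁) (hargle ρ₂ hρ₂ u₂)
        rw [← hLp_def] at hmax
        refine hmax.trans ?_
        refine mul_le_mul_of_nonneg_left ?_ hLp
        -- bound the difference of the arguments
        have hsplit : (A * ρ₁ ^ (γ - 1) - ‖v - u₁‖ ^ 2) -
            (A * ρ₂ ^ (γ - 1) - ‖v - u₂‖ ^ 2) =
            (A * ρ₁ ^ (γ - 1) - A * ρ₂ ^ (γ - 1)) +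
            (‖v - u₂‖ ^ 2 - ‖v - u₁‖ ^ 2) := by ring
        have hterm1 : |A * ρ₁ ^ (γ - 1) - A * ρ₂ ^ (γ - 1)| ≤ K₁ * |ρ₁ - ρ₂| := by
          have hB := my_abs_rpow_sub_rpow_le (p := γ - 1) (s := Set.Icc C₀ C₁)
            (convex_Icc _ _) hq.le
            (fun t ht => Or.inl (ne_of_gt (lt_of_lt_of_le hC₀ ht.1)))
            (fun t ht => le_trans hC₀.le ht.1)
            (fun t ht => mul_le_mul_of_nonneg_left
              (Real.rpow_le_rpow_of_nonpos hC₀ ht.1 (by linarith)) hq.le)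
            hρ₁ hρ₂
          calc |A * ρ₁ ^ (γ - 1) - A * ρ₂ ^ (γ - 1)|
              = A * |ρ₁ ^ (γ - 1) - ρ₂ ^ (γ - 1)| := by
                rw [← mul_sub, abs_mul, abs_of_pos hA]
            _ ≤ A * ((γ - 1) * C₀ ^ (γ - 1 - 1) * |ρ₁ - ρ₂|) :=
                mul_le_mul_of_nonneg_left hB hA.le
            _ = K₁ * |ρ₁ - ρ₂| := by rw [hK₁_def]; ring
        have hterm2 : |‖v - u₂‖ ^ 2 - ‖v - u₁‖ ^ 2| ≤ K₂ * ‖u₁ - u₂‖ := by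
          have hfac : ‖v - u₂‖ ^ 2 - ‖v - u₁‖ ^ 2 =
              (‖v - u₂‖ - ‖v - u₁‖) * (‖v - u₂‖ + ‖v - u₁‖) := by ring
          have hd1 : |‖v - u₂‖ - ‖v - u₁‖| ≤ ‖u₁ - u₂‖ := by
            have := abs_norm_sub_norm_le (v - u₂) (v - u₁)
            have he : (v - u₂) - (v - u₁) = u₁ - u₂ := by abel
            rwa [he] at this
          have hd2' : ‖v - u₂‖ + ‖v - u₁‖ ≤ K₂ := by
            have e1 : ‖v - u₁‖ ≤ ‖v‖ + ‖u₁‖ := norm_sub_le _ _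
            have e2 : ‖v - u₂‖ ≤ ‖v‖ + ‖u₂‖ := norm_sub_le _ _
            rw [hK₂_def]; linarith
          rw [hfac, abs_mul]
          have habs2 : |‖v - u₂‖ + ‖v - u₁‖| ≤ K₂ := by
            rw [abs_of_nonneg (by positivity)]; exact hd2'
          calc |‖v - u₂‖ - ‖v - u₁‖| * |‖v - u₂‖ + ‖v - u₁‖|
              ≤ ‖u₁ - u₂‖ * K₂ :=
                mul_le_mul hd1 habs2 (abs_nonneg _) (norm_nonneg _)
            _ = K₂ * ‖u₁ - u₂‖ := by ring
        calc |(A * ρ₁ ^ (γ - 1) - ‖v - u₁‖ ^ 2) - (A * ρ₂ ^ (γ - 1) - ‖v - u₂‖ ^ 2)|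
            ≤ |A * ρ₁ ^ (γ - 1) - A * ρ₂ ^ (γ - 1)| + |‖v - u₂‖ ^ 2 - ‖v - u₁‖ ^ 2| := by
              rw [hsplit]; exact abs_add_le _ _
          _ ≤ K₁ * |ρ₁ - ρ₂| + K₂ * ‖u₁ - u₂‖ := add_le_add hterm1 hterm2
          _ ≤ (K₁ + K₂) * Δ := by
              rw [hΔ_def]
              nlinarith [abs_nonneg (ρ₁ - ρ₂), norm_nonneg (u₁ - u₂),
                mul_nonneg hK₁ (norm_nonneg (u₁ - u₂)),
                mul_nonneg hK₂ (abs_nonneg (ρ₁ - ρ₂))]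
      have hweight : 1 + ‖v‖ ^ 2 ≤ 1 + R₀ ^ 2 := by
        have := pow_le_pow_left₀ (norm_nonneg v) hv 2
        linarith
      calc (1 + ‖v‖ ^ 2) * |Mpos d γ ρ₁ u₁ v - Mpos d γ ρ₂ u₂ v|
          ≤ (1 + R₀ ^ 2) * (|cConst d γ| * (Lp * ((K₁ + K₂) * Δ))) := by
            refine mul_le_mul hweight hMdiff (abs_nonneg _) ?_
            nlinarith [sq_nonneg R₀]
        _ = c' * Δ := by rw [hc'_def]; ring
    · rw [Set.indicator_of_notMem hv]
      rw [Metric.mem_closedBall, dist_zero_right, not_le] at hv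
      have hM0 : ∀ ρ ∈ Set.Icc C₀ C₁, ∀ u : EuclideanSpace ℝ (Fin d), ‖u‖ ≤ C₂ →
          Mpos d γ ρ u v = 0 := by
        intro ρ hρ u hu
        have h1 : Real.sqrt Rb < ‖v - u‖ := by
          have hnn := norm_sub_norm_le v u
          rw [hR₀_def] at hv
          linarith
        have h2 : Rb < ‖v - u‖ ^ 2 := by
          have hs := Real.sq_sqrt hRb.le
          nlinarith [Real.sqrt_nonneg Rb]
        have hle : ρ ^ (γ - 1) ≤ C₁ ^ (γ - 1) :=
          Real.rpow_le_rpow (le_trans hC₀.le hρ.1) hρ.2 hq.le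
        have h3 : 2 * γ / (γ - 1) * ρ ^ (γ - 1) - ‖v - u‖ ^ 2 ≤ 0 := by
          have hAa : A * ρ ^ (γ - 1) ≤ Rb := by
            rw [hRb_def]; exact mul_le_mul_of_nonneg_left hle hA.le
          rw [← hA_def]; linarith
        unfold Mpos
        rw [max_eq_right h3, Real.zero_rpow (by rw [← hp_def]; positivity), mul_zero]
      rw [hM0 ρ₁ hρ₁ u₁ hu₁, hM0 ρ₂ hρ₂ u₂ hu₂]
      simp
  -- compare the integrals
  have hmeas : MeasurableSet (Metric.closedBall (0 : EuclideanSpace ℝ (Fin d)) R₀) :=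
    measurableSet_closedBall
  have hgint : Integrable (Set.indicator
      (Metric.closedBall (0 : EuclideanSpace ℝ (Fin d)) R₀) (fun _ => c' * Δ)) volume := by
    rw [integrable_indicator_iff hmeas]
    exact integrableOn_const measure_closedBall_lt_top.ne
  calc (∫ v : EuclideanSpace ℝ (Fin d),
          (1 + ‖v‖ ^ 2) * |Mpos d γ ρ₁ u₁ v - Mpos d γ ρ₂ u₂ v|)
      ≤ ∫ v : EuclideanSpace ℝ (Fin d),
          Set.indicator (Metric.closedBall (0 : EuclideanSpace ℝ (Fin d)) R₀)
            (fun _ => c' * Δ) v :=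
        integral_mono_of_nonneg
          (Filter.Eventually.of_forall fun v => by positivity)
          hgint (Filter.Eventually.of_forall hpoint)
    _ = volB * (c' * Δ) := by
        rw [integral_indicator_const _ hmeas, measureReal_def, ← hvol_def, smul_eq_mul]
    _ ≤ (volB * c' + 1) * Δ := by nlinarith
end
end

section
/- Let d ≥ 1 be an integer, q > d, and T > 0. There exists a constant c > 0, depending only on d, q and T, such that for all t ∈ [0,T] and all x ∈ ℝ^d, ∫_{ℝ^d} e^{-|v|²} / (1 + |x - t v|^q) dv ≥ c / (1 + |x|^q). -/
open MeasureTheory Real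

noncomputable section

lemma aux_gauss_int (d : ℕ) :
    Integrable (fun v : EuclideanSpace ℝ (Fin d) => Real.exp (-‖v‖ ^ 2)) := by
  have h := (GaussianFourier.integrable_cexp_neg_mul_sq_norm_add
      (b := (1 : ℂ)) (by norm_num) 0 (0 : EuclideanSpace ℝ (Fin d))).norm
  refine h.congr ?_
  filter_upwards with v
  simp [Complex.norm_exp, ← Complex.ofReal_pow]

lemma aux_sum_rpow {q a b : ℝ} (hq : 0 ≤ q) (ha : 0 ≤ a) (hb : 0 ≤ b) :
    (a + b) ^ q ≤ 2 ^ q * (a ^ q + b ^ q) := by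
  have hm : 0 ≤ max a b := le_trans ha (le_max_left _ _)
  have h1 : (a + b) ^ q ≤ (2 * max a b) ^ q := by
    apply Real.rpow_le_rpow (by positivity) _ hq
    rw [two_mul]
    exact add_le_add (le_max_left _ _) (le_max_right _ _)
  have h2 : (2 * max a b) ^ q = 2 ^ q * (max a b) ^ q :=
    Real.mul_rpow (by norm_num) hm
  have h3 : (max a b) ^ q ≤ a ^ q + b ^ q := by
    rcases max_cases a b with ⟨he, _⟩ | ⟨he, _⟩ <;> rw [he]
    · exact le_add_of_nonneg_right (Real.rpow_nonneg hb q)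
    · exact le_add_of_nonneg_left (Real.rpow_nonneg ha q)
  calc (a + b) ^ q ≤ 2 ^ q * (max a b) ^ q := h2 ▸ h1
    _ ≤ 2 ^ q * (a ^ q + b ^ q) := mul_le_mul_of_nonneg_left h3 (by positivity)

/-- Lower bound for the Gaussian density along free transport: for `q > d` and `T > 0`
there is `c > 0` (depending only on `d`, `q`, `T`) such that for all `t ∈ [0,T]` and all
`x ∈ ℝ^d`, `∫ e^{-|v|²}/(1 + |x - t v|^q) dv ≥ c/(1 + |x|^q)`. -/
theorem gaussian_transport_lower_bound (d : ℕ) (hd : 1 ≤ d) (q : ℝ) (hq : (d : ℝ) < q)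
    (T : ℝ) (hT : 0 < T) :
    ∃ c : ℝ, 0 < c ∧
      ∀ t ∈ Set.Icc (0 : ℝ) T, ∀ x : EuclideanSpace ℝ (Fin d),
        c / (1 + ‖x‖ ^ q) ≤
          ∫ v : EuclideanSpace ℝ (Fin d),
            Real.exp (-‖v‖ ^ 2) / (1 + ‖x - t • v‖ ^ q) := by
  set E := EuclideanSpace ℝ (Fin d)
  have hq0 : (0 : ℝ) < q := lt_of_le_of_lt (Nat.cast_nonneg d) hq
  set B : Set E := Metric.closedBall 0 1 with hB
  set V : ℝ := (volume B).toReal with hV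
  have hVpos : 0 < V := by
    refine ENNReal.toReal_pos (Metric.measure_closedBall_pos volume _ one_pos).ne' ?_
    exact (isCompact_closedBall _ _).measure_lt_top.ne
  set K : ℝ := 1 + 2 ^ q * (1 + T ^ q) with hK
  have hKpos : 0 < K := by
    have : (0:ℝ) ≤ 2 ^ q := Real.rpow_nonneg (by norm_num) q
    have : (0:ℝ) ≤ T ^ q := Real.rpow_nonneg hT.le q
    positivity
  refine ⟨Real.exp (-1) * V / K, by positivity, ?_⟩
  rintro t ⟨ht0, htT⟩ x
  have hxq : (0:ℝ) ≤ ‖x‖ ^ q := Real.rpow_nonneg (norm_nonneg x) q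
  have hDden : (0:ℝ) < 1 + (‖x‖ + T) ^ q := by
    have : (0:ℝ) ≤ (‖x‖ + T) ^ q := Real.rpow_nonneg (by positivity) q
    linarith
  -- continuity of the integrand
  have hfc : Continuous fun v : E => Real.exp (-‖v‖ ^ 2) / (1 + ‖x - t • v‖ ^ q) := by
    have hden : Continuous fun v : E => 1 + ‖x - t • v‖ ^ q := by
      refine continuous_const.add ?_
      exact Continuous.rpow_const (by fun_prop)
        (fun v => Or.inr hq0.le)
    refine (Real.continuous_exp.comp (continuous_norm.pow 2).neg).div hden ?_
    intro v
    have : (0:ℝ) ≤ ‖x - t • v‖ ^ q := Real.rpow_nonneg (norm_nonneg _) q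
    positivity
  have hpos : ∀ v : E, 0 ≤ Real.exp (-‖v‖ ^ 2) / (1 + ‖x - t • v‖ ^ q) := by
    intro v
    have : (0:ℝ) ≤ ‖x - t • v‖ ^ q := Real.rpow_nonneg (norm_nonneg _) q
    positivity
  -- integrability
  have hfi : Integrable fun v : E => Real.exp (-‖v‖ ^ 2) / (1 + ‖x - t • v‖ ^ q) := by
    refine (aux_gauss_int d).mono hfc.aestronglyMeasurable ?_
    filter_upwards with v
    have h1 : (0:ℝ) ≤ ‖x - t • v‖ ^ q := Real.rpow_nonneg (norm_nonneg _) q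
    rw [Real.norm_eq_abs, Real.norm_eq_abs, abs_of_nonneg (hpos v),
      abs_of_nonneg (Real.exp_nonneg _)]
    calc Real.exp (-‖v‖ ^ 2) / (1 + ‖x - t • v‖ ^ q)
        ≤ Real.exp (-‖v‖ ^ 2) / 1 :=
          div_le_div_of_nonneg_left (Real.exp_nonneg _) one_pos (by linarith)
      _ = Real.exp (-‖v‖ ^ 2) := div_one _
  -- lower bound on the ball
  have hball : ∀ v ∈ B, Real.exp (-1) / (1 + (‖x‖ + T) ^ q)
      ≤ Real.exp (-‖v‖ ^ 2) / (1 + ‖x - t • v‖ ^ q) := by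
    intro v hv
    rw [hB, Metric.mem_closedBall, dist_zero_right] at hv
    have hnum : Real.exp (-1) ≤ Real.exp (-‖v‖ ^ 2) := by
      apply Real.exp_le_exp.mpr
      have : ‖v‖ ^ 2 ≤ 1 := by
        nlinarith [norm_nonneg v]
      linarith
    have hden : 1 + ‖x - t • v‖ ^ q ≤ 1 + (‖x‖ + T) ^ q := by
      have h1 : ‖x - t • v‖ ≤ ‖x‖ + T := by
        calc ‖x - t • v‖ ≤ ‖x‖ + ‖t • v‖ := norm_sub_le _ _
          _ = ‖x‖ + |t| * ‖v‖ := by rw [norm_smul, Real.norm_eq_abs]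
          _ ≤ ‖x‖ + T := by
              have : |t| * ‖v‖ ≤ T * 1 :=
                mul_le_mul (by rwa [abs_of_nonneg ht0]) hv (norm_nonneg v) hT.le
              linarith
      have := Real.rpow_le_rpow (norm_nonneg _) h1 hq0.le
      linarith
    have hd2 : (0:ℝ) < 1 + ‖x - t • v‖ ^ q := by
      have : (0:ℝ) ≤ ‖x - t • v‖ ^ q := Real.rpow_nonneg (norm_nonneg _) q
      linarith
    exact div_le_div₀ (Real.exp_nonneg _) hnum hd2 hden
  -- chain of inequalities
  have step1 : ∫ v in B, Real.exp (-‖v‖ ^ 2) / (1 + ‖x - t • v‖ ^ q)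
      ≤ ∫ v : E, Real.exp (-‖v‖ ^ 2) / (1 + ‖x - t • v‖ ^ q) :=
    setIntegral_le_integral hfi (Filter.Eventually.of_forall hpos)
  have step2 : V * (Real.exp (-1) / (1 + (‖x‖ + T) ^ q))
      ≤ ∫ v in B, Real.exp (-‖v‖ ^ 2) / (1 + ‖x - t • v‖ ^ q) := by
    have hmeas : MeasurableSet B := measurableSet_closedBall
    have := setIntegral_mono_on
      (integrableOn_const (isCompact_closedBall _ _).measure_lt_top.ne)
      hfi.integrableOn hmeas hball
    rwa [setIntegral_const, smul_eq_mul] at this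
  refine le_trans ?_ (le_trans step2 step1)
  -- final algebra
  have hkey : 1 + (‖x‖ + T) ^ q ≤ K * (1 + ‖x‖ ^ q) := by
    have h1 : (‖x‖ + T) ^ q ≤ 2 ^ q * (‖x‖ ^ q + T ^ q) :=
      aux_sum_rpow hq0.le (norm_nonneg x) hT.le
    have h2 : (0:ℝ) ≤ 2 ^ q := Real.rpow_nonneg (by norm_num) q
    have h3 : (0:ℝ) ≤ T ^ q := Real.rpow_nonneg hT.le q
    rw [hK]
    nlinarith [mul_nonneg (mul_nonneg h2 h3) hxq, mul_nonneg h2 hxq]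
  have hxden : (0:ℝ) < 1 + ‖x‖ ^ q := by linarith
  have hre : V * (Real.exp (-1) / (1 + (‖x‖ + T) ^ q))
      = (Real.exp (-1) * V) / (1 + (‖x‖ + T) ^ q) := by ring
  rw [hre, div_div]
  exact div_le_div_of_nonneg_left (by positivity) hDden hkey
end
end
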